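/- arXiv:2302.09954 — 4 statements merged into one kernel-verified Lean document; each statement's English description precedes it below -/
import Mathlib

section
/- Let T > 0. Let F11, F12 : [0,T] × [0,∞) → [0,∞) and G1 : [0,T] × [0,∞) → ℝ be continuous functions, with F11, F12 continuously differentiable on (0,T) × (0,∞), satisfying the null-form equation ∂_u F11 + ∂_v F12 = G1 on (0,T) × (0,∞), and satisfying the boundary condition F11(t,0) = F12(t,0) for all t ∈ [0,T]. Assume that ∫₀^∞ (F11 + F12)(0,r) dr and ∫₀^T ∫₀^∞ |G1(t,r)| dr dt are finite. Then there exists an absolute constant C > 0 (independent of T, F11, F12, G1) such that: (i) for every u ≤ T, the integral of F11 along the outgoing null ray t − r = u, namely ∫_{max(u,0)}^{T} F11(t, t−u) dt, is at most C·(∫₀^∞ (F11 + F12)(0,r) dr + ∫₀^T ∫₀^∞ |G1(t,r)| dr dt); and (ii) for every v ≥ 0, the integral of F12 along the incoming null ray t + r = v, namely ∫₀^{min(v,T)} F12(t, v−t) dt, is at most C·(∫₀^∞ (F11 + F12)(0,r) dr + ∫₀^T ∫₀^∞ |G1(t,r)| dr dt). -/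
open MeasureTheory Set

/-- Partial derivative in the first (time) variable. -/
noncomputable def pderivT {E : Type*} [NormedAddCommGroup E] [NormedSpace ℝ E]
    (f : ℝ → ℝ → E) (t r : ℝ) : E :=
  deriv (fun s => f s r) t

/-- Partial derivative in the second (radial) variable. -/
noncomputable def pderivR {E : Type*} [NormedAddCommGroup E] [NormedSpace ℝ E]
    (f : ℝ → ℝ → E) (t r : ℝ) : E :=
  deriv (f t) r

/-- Null derivative `∂_u = (1/2)(∂_t - ∂_r)`. -/
noncomputable def pderivU {E : Type*} [NormedAddCommGroup E] [NormedSpace ℝ E]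
    (f : ℝ → ℝ → E) (t r : ℝ) : E :=
  (2 : ℝ)⁻¹ • (pderivT f t r - pderivR f t r)

/-- Null derivative `∂_v = (1/2)(∂_t + ∂_r)`. -/
noncomputable def pderivV {E : Type*} [NormedAddCommGroup E] [NormedSpace ℝ E]
    (f : ℝ → ℝ → E) (t r : ℝ) : E :=
  (2 : ℝ)⁻¹ • (pderivT f t r + pderivR f t r)

/-!
With `P = (F11 + F12) / 2` and `Q = (F12 - F11) / 2` the null equation is the conservation law
`∂ₜ P + ∂ᵣ Q = G1`. Integrate it over a trapezoid bounded by `t = a`, `t = b`, `r = ρ`, the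
outgoing ray `t - r = w` and the incoming ray `t + r = v`, slicing in `r` for `∂ᵣ Q` and in `t`
for `∂ₜ P`. The boundary terms are exactly `∫ F11` along the outgoing side and `∫ F12` along the
incoming side, plus `∫ P ≥ 0` on the top, minus the data `∫ P` at the bottom and the flux `∫ Q`
through `r = ρ`, which vanishes on the axis by the boundary condition. The functions are only `C¹`
in the interior, so the trapezoid is placed `ε` inside the domain, and the estimate (with `C = 1`)
follows as `ε → 0` from the continuity of the boundary integrals in `ε`.
-/

section PartialDerivatives

variable {E : Type*} [NormedAddCommGroup E] [NormedSpace ℝ E] {f : ℝ → ℝ → E}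

theorem HasFDerivAt.hasDerivAt_fst_slice {p : ℝ × ℝ} {f' : ℝ × ℝ →L[ℝ] E}
    (hf : HasFDerivAt (fun q : ℝ × ℝ => f q.1 q.2) f' p) :
    HasDerivAt (fun s => f s p.2) (f' (1, 0)) p.1 :=
  HasFDerivAt.comp_hasDerivAt (l := fun q : ℝ × ℝ => f q.1 q.2) p.1 hf
    ((hasDerivAt_id' p.1).prodMk (hasDerivAt_const p.1 p.2))

theorem HasFDerivAt.hasDerivAt_snd_slice {p : ℝ × ℝ} {f' : ℝ × ℝ →L[ℝ] E}
    (hf : HasFDerivAt (fun q : ℝ × ℝ => f q.1 q.2) f' p) :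
    HasDerivAt (f p.1) (f' (0, 1)) p.2 :=
  HasFDerivAt.comp_hasDerivAt (l := fun q : ℝ × ℝ => f q.1 q.2) p.2 hf
    ((hasDerivAt_const p.2 p.1).prodMk (hasDerivAt_id' p.2))

variable {U : Set (ℝ × ℝ)}

theorem hasDerivAt_pderivT (hU : IsOpen U) (hf : ContDiffOn ℝ 1 (fun p : ℝ × ℝ => f p.1 p.2) U)
    {t r : ℝ} (h : (t, r) ∈ U) : HasDerivAt (fun s => f s r) (pderivT f t r) t := by
  have hf' := ((hf.differentiableOn one_ne_zero).differentiableAt (hU.mem_nhds h)).hasFDerivAt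
  exact hf'.hasDerivAt_fst_slice.differentiableAt.hasDerivAt

theorem hasDerivAt_pderivR (hU : IsOpen U) (hf : ContDiffOn ℝ 1 (fun p : ℝ × ℝ => f p.1 p.2) U)
    {t r : ℝ} (h : (t, r) ∈ U) : HasDerivAt (f t) (pderivR f t r) r := by
  have hf' := ((hf.differentiableOn one_ne_zero).differentiableAt (hU.mem_nhds h)).hasFDerivAt
  exact hf'.hasDerivAt_snd_slice.differentiableAt.hasDerivAt

theorem continuousOn_pderivT (hU : IsOpen U) (hf : ContDiffOn ℝ 1 (fun p : ℝ × ℝ => f p.1 p.2) U) :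
    ContinuousOn (fun p : ℝ × ℝ => pderivT f p.1 p.2) U :=
  ((hf.continuousOn_fderiv_of_isOpen hU le_rfl).clm_apply continuousOn_const).congr fun _ hp =>
    ((hf.differentiableOn one_ne_zero).differentiableAt
      (hU.mem_nhds hp)).hasFDerivAt.hasDerivAt_fst_slice.deriv

theorem continuousOn_pderivR (hU : IsOpen U) (hf : ContDiffOn ℝ 1 (fun p : ℝ × ℝ => f p.1 p.2) U) :
    ContinuousOn (fun p : ℝ × ℝ => pderivR f p.1 p.2) U :=
  ((hf.continuousOn_fderiv_of_isOpen hU le_rfl).clm_apply continuousOn_const).congr fun _ hp =>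
    ((hf.differentiableOn one_ne_zero).differentiableAt
      (hU.mem_nhds hp)).hasFDerivAt.hasDerivAt_snd_slice.deriv

end PartialDerivatives

section RegionBetween

def regionBetweenIcc (a b : ℝ) (α β : ℝ → ℝ) : Set (ℝ × ℝ) :=
  {p | p.1 ∈ Icc a b ∧ p.2 ∈ Icc (α p.1) (β p.1)}

variable {a b : ℝ} {α β : ℝ → ℝ}

theorem isClosed_regionBetweenIcc (hα : Continuous α) (hβ : Continuous β) :
    IsClosed (regionBetweenIcc a b α β) :=
  (isClosed_Icc.preimage continuous_fst).inter
    ((isClosed_le (hα.comp continuous_fst) continuous_snd).inter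
      (isClosed_le continuous_snd (hβ.comp continuous_fst)))

theorem isCompact_regionBetweenIcc (hα : Continuous α) (hβ : Continuous β) :
    IsCompact (regionBetweenIcc a b α β) := by
  obtain ⟨m, hm⟩ := ((isCompact_Icc (a := a) (b := b)).image hα).bddBelow
  obtain ⟨M, hM⟩ := ((isCompact_Icc (a := a) (b := b)).image hβ).bddAbove
  refine ((isCompact_Icc (a := a) (b := b)).prod (isCompact_Icc (a := m) (b := M)))
    |>.of_isClosed_subset (isClosed_regionBetweenIcc hα hβ) ?_
  rintro ⟨t, r⟩ ⟨ht, hr₁, hr₂⟩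
  exact ⟨ht, (hm (mem_image_of_mem α ht)).trans hr₁, hr₂.trans (hM (mem_image_of_mem β ht))⟩

variable {E : Type*} [NormedAddCommGroup E] [NormedSpace ℝ E]

theorem setIntegral_regionBetweenIcc {f : ℝ × ℝ → E} (hα : Continuous α) (hβ : Continuous β)
    (hab : a ≤ b) (hαβ : ∀ t ∈ Icc a b, α t ≤ β t)
    (hf : IntegrableOn f (regionBetweenIcc a b α β)) :
    ∫ p in regionBetweenIcc a b α β, f p = ∫ t in a..b, ∫ r in α t..β t, f (t, r) := by
  have hR := (isClosed_regionBetweenIcc (a := a) (b := b) hα hβ).measurableSet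
  have hslice : ∀ t, ∫ r, (regionBetweenIcc a b α β).indicator f (t, r) =
      (Icc a b).indicator (fun t => ∫ r in α t..β t, f (t, r)) t := by
    intro t
    by_cases ht : t ∈ Icc a b
    · rw [indicator_of_mem ht, intervalIntegral.integral_of_le (hαβ t ht),
        ← integral_Icc_eq_integral_Ioc, ← integral_indicator measurableSet_Icc]
      congr 1 with r
      have hmem : (t, r) ∈ regionBetweenIcc a b α β ↔ r ∈ Icc (α t) (β t) := and_iff_right ht
      simp only [indicator, hmem]
    · have hr : ∀ r, (regionBetweenIcc a b α β).indicator f (t, r) = 0 := fun r =>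
        indicator_of_notMem (fun h => ht h.1) f
      simp only [indicator_of_notMem ht, hr, integral_zero]
  rw [← integral_indicator hR, Measure.volume_eq_prod,
    integral_prod _ ((integrable_indicator_iff hR).2 hf)]
  simp only [hslice]
  rw [integral_indicator measurableSet_Icc, integral_Icc_eq_integral_Ioc,
    ← intervalIntegral.integral_of_le hab]

theorem setIntegral_preimage_swap_regionBetweenIcc {f : ℝ × ℝ → E} (hα : Continuous α)
    (hβ : Continuous β) (hab : a ≤ b) (hαβ : ∀ r ∈ Icc a b, α r ≤ β r)
    (hf : IntegrableOn f (Prod.swap ⁻¹' regionBetweenIcc a b α β)) :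
    ∫ p in Prod.swap ⁻¹' regionBetweenIcc a b α β, f p =
      ∫ r in a..b, ∫ t in α r..β r, f (t, r) := by
  have hR := (isClosed_regionBetweenIcc (a := a) (b := b) hα hβ).measurableSet
  have hswap : ∫ p in Prod.swap ⁻¹' regionBetweenIcc a b α β, f p =
      ∫ q in regionBetweenIcc a b α β, f q.swap := by
    rw [← integral_indicator (measurable_swap hR), ← integral_indicator hR, Measure.volume_eq_prod,
      ← integral_prod_swap]
    rfl
  rw [hswap, setIntegral_regionBetweenIcc hα hβ hab hαβ]
  · rfl
  · exact (Measure.measurePreserving_swap.integrableOn_comp_preimage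
      MeasurableEquiv.prodComm.measurableEmbedding).2 hf

end RegionBetween

section FundamentalTheorem

variable {E : Type*} [NormedAddCommGroup E] [NormedSpace ℝ E] [CompleteSpace E]
  {U : Set (ℝ × ℝ)} {a b : ℝ} {α β : ℝ → ℝ}

theorem setIntegral_pderivR_regionBetweenIcc {f : ℝ → ℝ → E} (hU : IsOpen U)
    (hf : ContDiffOn ℝ 1 (fun p : ℝ × ℝ => f p.1 p.2) U) (hα : Continuous α) (hβ : Continuous β)
    (hab : a ≤ b) (hαβ : ∀ t ∈ Icc a b, α t ≤ β t) (hsub : regionBetweenIcc a b α β ⊆ U) :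
    ∫ p in regionBetweenIcc a b α β, pderivR f p.1 p.2 = ∫ t in a..b, (f t (β t) - f t (α t)) := by
  have hcont := continuousOn_pderivR hU hf
  rw [setIntegral_regionBetweenIcc hα hβ hab hαβ
    ((hcont.mono hsub).integrableOn_compact (isCompact_regionBetweenIcc hα hβ))]
  refine intervalIntegral.integral_congr fun t ht => ?_
  rw [uIcc_of_le hab] at ht
  have hslice : MapsTo (fun r => (t, r)) (uIcc (α t) (β t)) U := fun r hr =>
    hsub ⟨ht, by rwa [uIcc_of_le (hαβ t ht)] at hr⟩
  exact intervalIntegral.integral_eq_sub_of_hasDerivAt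
    (fun r hr => hasDerivAt_pderivR hU hf (hslice hr))
    ((hcont.comp (Continuous.prodMk_right t).continuousOn hslice).intervalIntegrable)

theorem setIntegral_pderivT_preimage_swap_regionBetweenIcc {f : ℝ → ℝ → E} (hU : IsOpen U)
    (hf : ContDiffOn ℝ 1 (fun p : ℝ × ℝ => f p.1 p.2) U) (hα : Continuous α) (hβ : Continuous β)
    (hab : a ≤ b) (hαβ : ∀ r ∈ Icc a b, α r ≤ β r)
    (hsub : Prod.swap ⁻¹' regionBetweenIcc a b α β ⊆ U) :
    ∫ p in Prod.swap ⁻¹' regionBetweenIcc a b α β, pderivT f p.1 p.2 =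
      ∫ r in a..b, (f (β r) r - f (α r) r) := by
  have hcont := continuousOn_pderivT hU hf
  have hR : IsCompact (Prod.swap ⁻¹' regionBetweenIcc a b α β) := by
    rw [← image_swap_eq_preimage_swap]
    exact (isCompact_regionBetweenIcc hα hβ).image continuous_swap
  rw [setIntegral_preimage_swap_regionBetweenIcc hα hβ hab hαβ
    ((hcont.mono hsub).integrableOn_compact hR)]
  refine intervalIntegral.integral_congr fun r hr => ?_
  rw [uIcc_of_le hab] at hr
  have hslice : MapsTo (fun t => (t, r)) (uIcc (α r) (β r)) U := fun t ht =>
    hsub ⟨hr, by rwa [uIcc_of_le (hαβ r hr)] at ht⟩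
  exact intervalIntegral.integral_eq_sub_of_hasDerivAt
    (fun t ht => hasDerivAt_pderivT hU hf (hslice ht))
    ((hcont.comp (Continuous.prodMk_left r).continuousOn hslice).intervalIntegrable)

end FundamentalTheorem

theorem continuousOn_intervalIntegral_comp {f : ℝ × ℝ → ℝ} {a b c : ℝ} (hab : a ≤ b)
    (hf : ContinuousOn f (Icc a b ×ˢ Ici c)) {γ : ℝ → ℝ → ℝ × ℝ}
    (hγ : Continuous (Function.uncurry γ)) {α β : ℝ → ℝ} (hα : Continuous α) (hβ : Continuous β)
    {S : Set ℝ} (hS : ∀ x ∈ S, MapsTo (γ x) (uIcc (α x) (β x)) (Icc a b ×ˢ Ici c)) :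
    ContinuousOn (fun x => ∫ y in α x..β x, f (γ x y)) S := by
  -- `π` is a continuous retraction onto `Icc a b ×ˢ Ici c`, so `f ∘ π` extends `f` continuously.
  let π : ℝ × ℝ → ℝ × ℝ := fun p => (max a (min b p.1), max c p.2)
  have hπ : ∀ p ∈ Icc a b ×ˢ Ici c, π p = p := fun p hp =>
    Prod.ext (by simp [π, hp.1.1, hp.1.2]) (max_eq_right hp.2)
  have hg : Continuous fun x : ℝ × ℝ => f (π (γ x.1 x.2)) :=
    (hf.comp_continuous (by fun_prop) fun p =>
      ⟨⟨le_max_left _ _, max_le hab (min_le_left _ _)⟩, le_max_left c p.2⟩).comp hγ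
  have hcont : Continuous fun x => ∫ y in α x..β x, f (π (γ x y)) := by
    have hint : ∀ x s s', IntervalIntegrable (fun y => f (π (γ x y))) volume s s' := fun x _ _ =>
      (hg.comp (Continuous.prodMk_right x)).intervalIntegrable _ _
    have hsub : (fun x => ∫ y in α x..β x, f (π (γ x y))) = fun x =>
        (∫ y in (0 : ℝ)..β x, f (π (γ x y))) - ∫ y in (0 : ℝ)..α x, f (π (γ x y)) :=
      funext fun x => (intervalIntegral.integral_interval_sub_left (hint _ _ _) (hint _ _ _)).symm
    rw [hsub]
    exact (intervalIntegral.continuous_parametric_intervalIntegral_of_continuous hg hβ).sub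
      (intervalIntegral.continuous_parametric_intervalIntegral_of_continuous hg hα)
  refine hcont.continuousOn.congr fun x hx => intervalIntegral.integral_congr fun y hy => ?_
  simp only [hπ _ (hS x hx hy)]

theorem le_of_forall_Ioc_le_of_continuousOn {f g : ℝ → ℝ} {a b : ℝ} (hab : a < b)
    (hf : ContinuousOn f (Icc a b)) (hg : ContinuousOn g (Icc a b))
    (h : ∀ x ∈ Ioc a b, f x ≤ g x) : f a ≤ g a := by
  rw [← closure_Ioc hab.ne] at hf hg
  exact le_on_closure h hf hg (closure_Ioc hab.ne ▸ left_mem_Icc.2 hab.le)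

theorem intervalIntegral_le_setIntegral_Ioi {f : ℝ → ℝ} {a c d : ℝ} (hf : IntegrableOn f (Ioi a))
    (hf₀ : ∀ r ∈ Ioi a, 0 ≤ f r) (hac : a ≤ c) (hcd : c ≤ d) :
    ∫ r in c..d, f r ≤ ∫ r in Ioi a, f r := by
  rw [intervalIntegral.integral_of_le hcd]
  exact setIntegral_mono_set hf ((ae_restrict_iff' measurableSet_Ioi).2 (.of_forall hf₀))
    (Ioc_subset_Ioi_self.trans (Ioi_subset_Ioi hac)).eventuallyLE

section NullTrapezoid

def nullTrapezoid (a b ρ w v : ℝ) : Set (ℝ × ℝ) :=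
  {p | p.1 ∈ Icc a b ∧ ρ ≤ p.2 ∧ p.1 - p.2 ≤ w ∧ p.1 + p.2 ≤ v}

variable {a b ρ w v : ℝ}

theorem nullTrapezoid_eq_regionBetweenIcc :
    nullTrapezoid a b ρ w v = regionBetweenIcc a b (fun t => max ρ (t - w)) (fun t => v - t) := by
  ext ⟨t, r⟩
  simp only [nullTrapezoid, regionBetweenIcc, mem_Icc, max_le_iff]
  constructor
  · rintro ⟨ht, hρ, hw, hv⟩
    exact ⟨ht, ⟨hρ, by linarith⟩, by linarith⟩
  · rintro ⟨ht, ⟨hρ, hw⟩, hv⟩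
    exact ⟨ht, hρ, by linarith, by linarith⟩

theorem nullTrapezoid_eq_preimage_swap_regionBetweenIcc :
    nullTrapezoid a b ρ w v = Prod.swap ⁻¹'
      regionBetweenIcc ρ (v - a) (fun _ => a) (fun r => min (min b (w + r)) (v - r)) := by
  ext ⟨t, r⟩
  simp only [nullTrapezoid, regionBetweenIcc, mem_preimage, Prod.swap_prod_mk, mem_Icc,
    le_min_iff]
  constructor
  · rintro ⟨⟨ha, hb⟩, hρ, hw, hv⟩
    exact ⟨⟨hρ, by linarith⟩, ha, ⟨hb, by linarith⟩, by linarith⟩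
  · rintro ⟨⟨hρ, -⟩, ha, ⟨hb, hw⟩, hv⟩
    exact ⟨⟨ha, hb⟩, hρ, by linarith, by linarith⟩

variable {U : Set (ℝ × ℝ)} {P Q g : ℝ → ℝ → ℝ}

theorem setIntegral_nullTrapezoid_eq_integral_slices (hU : IsOpen U)
    (hP : ContDiffOn ℝ 1 (fun p : ℝ × ℝ => P p.1 p.2) U)
    (hQ : ContDiffOn ℝ 1 (fun p : ℝ × ℝ => Q p.1 p.2) U)
    (hdiv : ∀ p ∈ U, pderivT P p.1 p.2 + pderivR Q p.1 p.2 = g p.1 p.2)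
    (hsub : nullTrapezoid a b ρ w v ⊆ U) (hab : a ≤ b) (haw : a ≤ w + ρ) (hbv : ρ + b ≤ v)
    (hbw : 2 * b ≤ v + w) :
    ∫ p in nullTrapezoid a b ρ w v, g p.1 p.2 =
      (∫ t in a..b, (Q t (v - t) - Q t (max ρ (t - w)))) +
        ∫ r in ρ..(v - a), (P (min (min b (w + r)) (v - r)) r - P a r) := by
  have hD := isCompact_regionBetweenIcc (a := a) (b := b) (α := fun t => max ρ (t - w))
    (β := fun t => v - t) (by fun_prop) (by fun_prop)
  rw [← nullTrapezoid_eq_regionBetweenIcc] at hD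
  have hPT := ((continuousOn_pderivT hU hP).mono hsub).integrableOn_compact (μ := volume) hD
  have hQR := ((continuousOn_pderivR hU hQ).mono hsub).integrableOn_compact (μ := volume) hD
  rw [← setIntegral_congr_fun hD.measurableSet fun p hp => hdiv p (hsub hp),
    integral_add hPT hQR, add_comm]
  congr 1
  · rw [nullTrapezoid_eq_regionBetweenIcc] at hsub ⊢
    refine setIntegral_pderivR_regionBetweenIcc hU hQ (by fun_prop) (by fun_prop) hab
      (fun t ht => max_le ?_ ?_) hsub <;> linarith [ht.2]
  · rw [nullTrapezoid_eq_preimage_swap_regionBetweenIcc] at hsub ⊢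
    refine setIntegral_pderivT_preimage_swap_regionBetweenIcc hU hP (by fun_prop) (by fun_prop)
      (by linarith) (fun r hr => le_min (le_min hab ?_) ?_) hsub <;> linarith [hr.1, hr.2]

theorem integral_max_eq_left_add_outgoing {f : ℝ → ℝ → ℝ} (haw : a ≤ w + ρ) (hwb : w + ρ ≤ b)
    (hf : ContinuousOn (fun t => f t (max ρ (t - w))) (Icc a b)) :
    ∫ t in a..b, f t (max ρ (t - w)) =
      (∫ t in a..(w + ρ), f t ρ) + ∫ t in (w + ρ)..b, f t (t - w) := by
  have hint : ∀ x y, a ≤ x → x ≤ y → y ≤ b →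
      IntervalIntegrable (fun t => f t (max ρ (t - w))) volume x y := fun x y hx hxy hy =>
    (hf.mono (by rw [uIcc_of_le hxy]; exact Icc_subset_Icc hx hy)).intervalIntegrable
  rw [← intervalIntegral.integral_add_adjacent_intervals (hint a (w + ρ) le_rfl haw hwb)
    (hint (w + ρ) b haw hwb le_rfl)]
  congr 1 <;> refine intervalIntegral.integral_congr fun t ht => ?_
  · rw [uIcc_of_le haw] at ht
    simp only [max_eq_left (show t - w ≤ ρ by linarith [ht.2])]
  · rw [uIcc_of_le hwb] at ht
    simp only [max_eq_right (show ρ ≤ t - w by linarith [ht.1])]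

theorem integral_min_eq_outgoing_add_top_add_incoming {f : ℝ → ℝ → ℝ} (hab : a ≤ b)
    (hwb : w + ρ ≤ b) (hbw : 2 * b ≤ v + w)
    (hf : ContinuousOn (fun r => f (min (min b (w + r)) (v - r)) r) (Icc ρ (v - a))) :
    ∫ r in ρ..(v - a), f (min (min b (w + r)) (v - r)) r =
      (∫ t in (w + ρ)..b, f t (t - w)) + (∫ r in (b - w)..(v - b), f b r) +
        ∫ t in a..b, f t (v - t) := by
  have hint : ∀ x y, ρ ≤ x → x ≤ y → y ≤ v - a →
      IntervalIntegrable (fun r => f (min (min b (w + r)) (v - r)) r) volume x y :=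
    fun x y hx hxy hy =>
      (hf.mono (by rw [uIcc_of_le hxy]; exact Icc_subset_Icc hx hy)).intervalIntegrable
  have h₁ : ρ ≤ b - w := by linarith
  have h₂ : b - w ≤ v - b := by linarith
  have h₃ : v - b ≤ v - a := by linarith
  rw [← intervalIntegral.integral_add_adjacent_intervals (hint _ _ le_rfl h₁ (by linarith))
      (hint _ _ h₁ (h₂.trans h₃) le_rfl),
    ← intervalIntegral.integral_add_adjacent_intervals (hint _ _ h₁ h₂ (by linarith))
      (hint _ _ (h₁.trans h₂) h₃ le_rfl), ← add_assoc]
  congr 1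
  congr 1
  · have hshift := intervalIntegral.integral_comp_add_left (fun t => f t (t - w)) w
      (a := ρ) (b := b - w)
    simp only [add_sub_cancel_left, add_sub_cancel] at hshift
    rw [← hshift]
    refine intervalIntegral.integral_congr fun r hr => ?_
    rw [uIcc_of_le h₁] at hr
    rw [min_eq_right (show w + r ≤ b by linarith [hr.2]),
      min_eq_left (show w + r ≤ v - r by linarith [hr.2])]
  · refine intervalIntegral.integral_congr fun r hr => ?_
    rw [uIcc_of_le h₂] at hr
    rw [min_eq_left (show b ≤ w + r by linarith [hr.1]),
      min_eq_left (show b ≤ v - r by linarith [hr.2])]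
  · have hreflect := intervalIntegral.integral_comp_sub_left (fun t => f t (v - t)) v
      (a := v - b) (b := v - a)
    simp only [sub_sub_cancel] at hreflect
    rw [← hreflect]
    refine intervalIntegral.integral_congr fun r hr => ?_
    rw [uIcc_of_le h₃] at hr
    rw [min_eq_right (le_min (show v - r ≤ b by linarith [hr.1])
      (show v - r ≤ w + r by linarith [hr.1]))]

theorem setIntegral_nullTrapezoid_eq (hU : IsOpen U)
    (hP : ContDiffOn ℝ 1 (fun p : ℝ × ℝ => P p.1 p.2) U)
    (hQ : ContDiffOn ℝ 1 (fun p : ℝ × ℝ => Q p.1 p.2) U)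
    (hdiv : ∀ p ∈ U, pderivT P p.1 p.2 + pderivR Q p.1 p.2 = g p.1 p.2)
    (hsub : nullTrapezoid a b ρ w v ⊆ U) (haw : a ≤ w + ρ) (hwb : w + ρ ≤ b)
    (hbw : 2 * b ≤ v + w) :
    ∫ p in nullTrapezoid a b ρ w v, g p.1 p.2 =
      (∫ t in (w + ρ)..b, (P t (t - w) - Q t (t - w))) +
        (∫ t in a..b, (P t (v - t) + Q t (v - t))) + (∫ r in (b - w)..(v - b), P b r) -
          (∫ t in a..(w + ρ), Q t ρ) - ∫ r in ρ..(v - a), P a r := by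
  set D := nullTrapezoid a b ρ w v with hD
  have hab : a ≤ b := haw.trans hwb
  have hPc : ContinuousOn (fun p : ℝ × ℝ => P p.1 p.2) D := hP.continuousOn.mono hsub
  have hQc : ContinuousOn (fun p : ℝ × ℝ => Q p.1 p.2) D := hQ.continuousOn.mono hsub
  have hint : ∀ {F : ℝ → ℝ → ℝ} {γ : ℝ → ℝ × ℝ} {x y : ℝ},
      ContinuousOn (fun p : ℝ × ℝ => F p.1 p.2) D → Continuous γ → x ≤ y → MapsTo γ (Icc x y) D →
        IntervalIntegrable (fun s => F (γ s).1 (γ s).2) volume x y := fun hF hγ hxy hmaps =>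
    (hF.comp hγ.continuousOn (uIcc_of_le hxy ▸ hmaps)).intervalIntegrable
  have hin : MapsTo (fun t => (t, v - t)) (Icc a b) D := fun t ht =>
    ⟨ht, by linarith [ht.2], by linarith [ht.2], by linarith⟩
  have hout : MapsTo (fun t => (t, t - w)) (Icc (w + ρ) b) D := fun t ht =>
    ⟨⟨haw.trans ht.1, ht.2⟩, by linarith [ht.1], by linarith, by linarith [ht.2]⟩
  have hmax : MapsTo (fun t => (t, max ρ (t - w))) (Icc a b) D := fun t ht => by
    rw [hD, nullTrapezoid_eq_regionBetweenIcc]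
    exact ⟨ht, le_rfl, max_le (by linarith [ht.2]) (by linarith [ht.2])⟩
  have hmin : MapsTo (fun r => (min (min b (w + r)) (v - r), r)) (Icc ρ (v - a)) D := fun r hr => by
    rw [hD, nullTrapezoid_eq_preimage_swap_regionBetweenIcc]
    exact ⟨hr, le_min (le_min hab (by linarith [hr.1])) (by linarith [hr.2]), le_rfl⟩
  have hbot : MapsTo (fun r => (a, r)) (Icc ρ (v - a)) D := fun r hr =>
    ⟨⟨le_rfl, hab⟩, hr.1, by linarith [hr.1], by linarith [hr.2]⟩
  have hρv : ρ ≤ v - a := by linarith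
  rw [setIntegral_nullTrapezoid_eq_integral_slices hU hP hQ hdiv hsub hab haw
      (by linarith) hbw,
    intervalIntegral.integral_sub (hint hQc (by fun_prop) hab hin)
      (hint hQc (by fun_prop) hab hmax),
    intervalIntegral.integral_sub (hint hPc (by fun_prop) hρv hmin)
      (hint hPc (by fun_prop) hρv hbot),
    integral_max_eq_left_add_outgoing haw hwb (hQc.comp (by fun_prop) hmax),
    integral_min_eq_outgoing_add_top_add_incoming hab hwb hbw (hPc.comp (by fun_prop) hmin),
    intervalIntegral.integral_sub (hint hPc (by fun_prop) hwb hout)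
      (hint hQc (by fun_prop) hwb hout),
    intervalIntegral.integral_add (hint hPc (by fun_prop) hab hin)
      (hint hQc (by fun_prop) hab hin)]
  ring

end NullTrapezoid

section NullSystem

variable {T : ℝ} {F11 F12 G1 : ℝ → ℝ → ℝ}

theorem pderivT_energy_add_pderivR_flux {U : Set (ℝ × ℝ)} (hU : IsOpen U)
    (hd11 : ContDiffOn ℝ 1 (fun p : ℝ × ℝ => F11 p.1 p.2) U)
    (hd12 : ContDiffOn ℝ 1 (fun p : ℝ × ℝ => F12 p.1 p.2) U) {t r : ℝ} (h : (t, r) ∈ U) :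
    pderivT (fun t r => (F11 t r + F12 t r) / 2) t r +
        pderivR (fun t r => (F12 t r - F11 t r) / 2) t r =
      pderivU F11 t r + pderivV F12 t r := by
  have hT : HasDerivAt (fun s => (F11 s r + F12 s r) / 2)
      ((pderivT F11 t r + pderivT F12 t r) / 2) t :=
    ((hasDerivAt_pderivT hU hd11 h).add (hasDerivAt_pderivT hU hd12 h)).div_const 2
  have hR : HasDerivAt (fun s => (F12 t s - F11 t s) / 2)
      ((pderivR F12 t r - pderivR F11 t r) / 2) r :=
    ((hasDerivAt_pderivR hU hd12 h).sub (hasDerivAt_pderivR hU hd11 h)).div_const 2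
  rw [pderivT, pderivR, hT.deriv, hR.deriv, pderivU, pderivV, smul_eq_mul, smul_eq_mul]
  ring

theorem integral_outgoing_add_integral_incoming_le {a b ρ w v : ℝ}
    (h11 : ∀ t r, t ∈ Icc 0 T → r ∈ Ici (0 : ℝ) → 0 ≤ F11 t r)
    (h12 : ∀ t r, t ∈ Icc 0 T → r ∈ Ici (0 : ℝ) → 0 ≤ F12 t r)
    (hd11 : ContDiffOn ℝ 1 (fun p : ℝ × ℝ => F11 p.1 p.2) (Ioo 0 T ×ˢ Ioi 0))
    (hd12 : ContDiffOn ℝ 1 (fun p : ℝ × ℝ => F12 p.1 p.2) (Ioo 0 T ×ˢ Ioi 0))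
    (heq : ∀ t r, t ∈ Ioo 0 T → r ∈ Ioi (0 : ℝ) →
      pderivU F11 t r + pderivV F12 t r = G1 t r)
    (hG : IntegrableOn (fun p : ℝ × ℝ => G1 p.1 p.2) (Icc 0 T ×ˢ Ioi 0))
    (ha : 0 < a) (hρ : 0 < ρ) (hbT : b < T) (haw : a ≤ w + ρ) (hwb : w + ρ ≤ b)
    (hbw : 2 * b ≤ v + w) :
    (∫ t in (w + ρ)..b, F11 t (t - w)) + (∫ t in a..b, F12 t (v - t)) ≤
      (∫ p in Icc (0 : ℝ) T ×ˢ Ioi (0 : ℝ), |G1 p.1 p.2|) +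
        (∫ t in a..(w + ρ), (F12 t ρ - F11 t ρ) / 2) +
          ∫ r in ρ..(v - a), (F11 a r + F12 a r) / 2 := by
  have hU : IsOpen (Ioo 0 T ×ˢ Ioi (0 : ℝ)) := isOpen_Ioo.prod isOpen_Ioi
  have hsub : nullTrapezoid a b ρ w v ⊆ Ioo 0 T ×ˢ Ioi 0 := fun p hp =>
    ⟨⟨ha.trans_le hp.1.1, hp.1.2.trans_lt hbT⟩, hρ.trans_le hp.2.1⟩
  have hflux := setIntegral_nullTrapezoid_eq hU ((hd11.add hd12).div_const 2)
    ((hd12.sub hd11).div_const 2)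
    (fun p hp => (pderivT_energy_add_pderivR_flux hU hd11 hd12 hp).trans (heq p.1 p.2 hp.1 hp.2))
    hsub haw hwb hbw
  have hsubG : nullTrapezoid a b ρ w v ⊆ Icc 0 T ×ˢ Ioi 0 :=
    hsub.trans (prod_mono Ioo_subset_Icc_self le_rfl)
  have hGD : ∫ p in nullTrapezoid a b ρ w v, G1 p.1 p.2 ≤
      ∫ p in Icc (0 : ℝ) T ×ˢ Ioi (0 : ℝ), |G1 p.1 p.2| :=
    calc _ ≤ ∫ p in nullTrapezoid a b ρ w v, |G1 p.1 p.2| :=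
          integral_mono (hG.mono_set hsubG) (hG.mono_set hsubG).abs fun p => le_abs_self _
      _ ≤ _ := setIntegral_mono_set hG.abs (.of_forall fun p => abs_nonneg _) hsubG.eventuallyLE
  have htop : 0 ≤ ∫ r in (b - w)..(v - b), (F11 b r + F12 b r) / 2 :=
    intervalIntegral.integral_nonneg (by linarith) fun r hr => by
      have hb : b ∈ Icc 0 T := ⟨by linarith, hbT.le⟩
      have hr : r ∈ Ici (0 : ℝ) := by simp only [mem_Ici]; linarith [hr.1]
      linarith [h11 b r hb hr, h12 b r hb hr]
  have hout : ∫ t in (w + ρ)..b, ((F11 t (t - w) + F12 t (t - w)) / 2 -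
      (F12 t (t - w) - F11 t (t - w)) / 2) = ∫ t in (w + ρ)..b, F11 t (t - w) :=
    intervalIntegral.integral_congr fun t _ => by ring
  have hin : ∫ t in a..b, ((F11 t (v - t) + F12 t (v - t)) / 2 +
      (F12 t (v - t) - F11 t (v - t)) / 2) = ∫ t in a..b, F12 t (v - t) :=
    intervalIntegral.integral_congr fun t _ => by ring
  rw [hout, hin] at hflux
  linarith

theorem integral_initialEnergy_le (hT : 0 ≤ T)
    (h11 : ∀ t r, t ∈ Icc 0 T → r ∈ Ici (0 : ℝ) → 0 ≤ F11 t r)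
    (h12 : ∀ t r, t ∈ Icc 0 T → r ∈ Ici (0 : ℝ) → 0 ≤ F12 t r)
    (hInt : IntegrableOn (fun r => F11 0 r + F12 0 r) (Ioi 0)) {c d : ℝ} (hc : 0 ≤ c)
    (hcd : c ≤ d) :
    ∫ r in c..d, (F11 0 r + F12 0 r) / 2 ≤ ∫ r in Ioi (0 : ℝ), (F11 0 r + F12 0 r) := by
  have h₀ : ∀ r ∈ Ioi (0 : ℝ), 0 ≤ F11 0 r + F12 0 r := fun r hr =>
    add_nonneg (h11 0 r ⟨le_rfl, hT⟩ (Ioi_subset_Ici_self hr))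
      (h12 0 r ⟨le_rfl, hT⟩ (Ioi_subset_Ici_self hr))
  rw [intervalIntegral.integral_div]
  linarith [intervalIntegral_le_setIntegral_Ioi hInt h₀ hc hcd,
    setIntegral_nonneg (μ := volume) measurableSet_Ioi h₀]

theorem initialEnergy_add_source_nonneg (hT : 0 ≤ T)
    (h11 : ∀ t r, t ∈ Icc 0 T → r ∈ Ici (0 : ℝ) → 0 ≤ F11 t r)
    (h12 : ∀ t r, t ∈ Icc 0 T → r ∈ Ici (0 : ℝ) → 0 ≤ F12 t r) :
    0 ≤ (∫ r in Ioi (0 : ℝ), (F11 0 r + F12 0 r)) +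
      ∫ p in Icc (0 : ℝ) T ×ˢ Ioi (0 : ℝ), |G1 p.1 p.2| :=
  add_nonneg (setIntegral_nonneg measurableSet_Ioi fun r hr =>
      add_nonneg (h11 0 r ⟨le_rfl, hT⟩ (Ioi_subset_Ici_self hr))
        (h12 0 r ⟨le_rfl, hT⟩ (Ioi_subset_Ici_self hr)))
    (setIntegral_nonneg (measurableSet_Icc.prod measurableSet_Ioi) fun _ _ => abs_nonneg _)

theorem integral_flux_axis_eq_zero (hbc : ∀ t ∈ Icc (0 : ℝ) T, F11 t 0 = F12 t 0) {c : ℝ}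
    (hc : 0 ≤ c) (hcT : c ≤ T) : ∫ t in (0 : ℝ)..c, (F12 t 0 - F11 t 0) / 2 = 0 := by
  refine (intervalIntegral.integral_congr fun t ht => ?_).trans intervalIntegral.integral_zero
  rw [uIcc_of_le hc] at ht
  simp only [hbc t ⟨ht.1, ht.2.trans hcT⟩, sub_self, zero_div]

theorem integral_outgoing_le (hT : 0 < T)
    (h11 : ∀ t r, t ∈ Icc 0 T → r ∈ Ici (0 : ℝ) → 0 ≤ F11 t r)
    (h12 : ∀ t r, t ∈ Icc 0 T → r ∈ Ici (0 : ℝ) → 0 ≤ F12 t r)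
    (hc11 : ContinuousOn (fun p : ℝ × ℝ => F11 p.1 p.2) (Icc 0 T ×ˢ Ici 0))
    (hc12 : ContinuousOn (fun p : ℝ × ℝ => F12 p.1 p.2) (Icc 0 T ×ˢ Ici 0))
    (hd11 : ContDiffOn ℝ 1 (fun p : ℝ × ℝ => F11 p.1 p.2) (Ioo 0 T ×ˢ Ioi 0))
    (hd12 : ContDiffOn ℝ 1 (fun p : ℝ × ℝ => F12 p.1 p.2) (Ioo 0 T ×ˢ Ioi 0))
    (heq : ∀ t r, t ∈ Ioo 0 T → r ∈ Ioi (0 : ℝ) →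
      pderivU F11 t r + pderivV F12 t r = G1 t r)
    (hbc : ∀ t ∈ Icc (0 : ℝ) T, F11 t 0 = F12 t 0)
    (hInt : IntegrableOn (fun r => F11 0 r + F12 0 r) (Ioi 0))
    (hG : IntegrableOn (fun p : ℝ × ℝ => G1 p.1 p.2) (Icc 0 T ×ˢ Ioi 0)) {u : ℝ} (hu : u ≤ T) :
    ∫ t in (max u 0)..T, F11 t (t - u) ≤
      (∫ r in Ioi (0 : ℝ), (F11 0 r + F12 0 r)) +
        ∫ p in Icc (0 : ℝ) T ×ˢ Ioi (0 : ℝ), |G1 p.1 p.2| := by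
  set m := max u 0
  have hum : u ≤ m := le_max_left u 0
  have hm : 0 ≤ m := le_max_right u 0
  rcases (show m ≤ T from max_le hu hT.le).eq_or_lt with hmT | hmT
  · rw [hmT, intervalIntegral.integral_same]
    exact initialEnergy_add_source_nonneg hT.le h11 h12
  obtain ⟨δ, hδ, hmδ⟩ : ∃ δ > 0, m + 2 * δ ≤ T := ⟨(T - m) / 2, by linarith, by linarith⟩
  -- The trapezoid with outgoing side on the ray, bottom `t = ε`, top `t = T - ε` and incoming
  -- side `t + r = 2T - u` (which meets the ray at `t = T`), pushed `ε` into the interior.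
  have hε : ∀ ε ∈ Ioc 0 δ, ∫ t in (m + ε)..(T - ε), F11 t (t - u) ≤
      (∫ p in Icc (0 : ℝ) T ×ˢ Ioi (0 : ℝ), |G1 p.1 p.2|) +
        (∫ t in ε..(m + ε), (F12 t (m - u + ε) - F11 t (m - u + ε)) / 2) +
          ∫ r in (m - u + ε)..(2 * T - u - ε), (F11 ε r + F12 ε r) / 2 := by
    intro ε hε
    have h := integral_outgoing_add_integral_incoming_le (a := ε) (b := T - ε) (ρ := m - u + ε)
      (w := u) (v := 2 * T - u)
      h11 h12 hd11 hd12 heq hG hε.1 (by linarith [hε.1]) (by linarith [hε.1]) (by linarith)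
      (by linarith [hε.2]) (by linarith [hε.1])
    rw [show u + (m - u + ε) = m + ε by ring] at h
    have hin : 0 ≤ ∫ t in ε..(T - ε), F12 t (2 * T - u - t) :=
      intervalIntegral.integral_nonneg (by linarith [hε.2]) fun t ht =>
        h12 t _ ⟨by linarith [hε.1, ht.1], by linarith [hε.1, ht.2]⟩
          (mem_Ici.2 (by linarith [hε.1, ht.2]))
    linarith
  have hL : ContinuousOn (fun ε => ∫ t in (m + ε)..(T - ε), F11 t (t - u)) (Icc 0 δ) :=
    continuousOn_intervalIntegral_comp (γ := fun _ t => (t, t - u)) hT.le hc11 (by fun_prop)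
      (by fun_prop) (by fun_prop) fun ε hε t ht => by
        rw [uIcc_of_le (by linarith [hε.2])] at ht
        exact mk_mem_prod ⟨by linarith [hε.1, ht.1], by linarith [hε.1, ht.2]⟩
          (mem_Ici.2 (by linarith [hε.1, ht.1]))
  have hA : ContinuousOn (fun ε => ∫ t in ε..(m + ε), (F12 t (m - u + ε) - F11 t (m - u + ε)) / 2)
      (Icc 0 δ) :=
    continuousOn_intervalIntegral_comp (f := fun p => (F12 p.1 p.2 - F11 p.1 p.2) / 2)
      (γ := fun ε t => (t, m - u + ε)) hT.le ((hc12.sub hc11).div_const 2) (by fun_prop)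
      (by fun_prop) (by fun_prop) fun ε hε t ht => by
        rw [uIcc_of_le (by linarith [hε.1])] at ht
        exact mk_mem_prod ⟨by linarith [hε.1, ht.1], by linarith [hε.2, ht.2]⟩
          (mem_Ici.2 (by linarith [hε.1]))
  have hB : ContinuousOn (fun ε => ∫ r in (m - u + ε)..(2 * T - u - ε), (F11 ε r + F12 ε r) / 2)
      (Icc 0 δ) :=
    continuousOn_intervalIntegral_comp (f := fun p => (F11 p.1 p.2 + F12 p.1 p.2) / 2)
      (γ := fun ε r => (ε, r)) hT.le ((hc11.add hc12).div_const 2) (by fun_prop)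
      (by fun_prop) (by fun_prop) fun ε hε r hr => by
        rw [uIcc_of_le (by linarith [hε.2])] at hr
        exact mk_mem_prod ⟨hε.1, by linarith [hε.2]⟩ (mem_Ici.2 (by linarith [hε.1, hr.1]))
  have h₀ := le_of_forall_Ioc_le_of_continuousOn hδ hL ((continuousOn_const.add hA).add hB) hε
  simp only [Pi.add_apply, add_zero, sub_zero] at h₀
  have hA₀ : ∫ t in (0 : ℝ)..m, (F12 t (m - u) - F11 t (m - u)) / 2 = 0 := by
    rcases le_total u 0 with hu₀ | hu₀
    · rw [show m = 0 from max_eq_right hu₀, intervalIntegral.integral_same]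
    · rw [show m = u from max_eq_left hu₀, sub_self]
      exact integral_flux_axis_eq_zero hbc hu₀ hu
  linarith [integral_initialEnergy_le hT.le h11 h12 hInt (c := m - u) (d := 2 * T - u)
    (by linarith) (by linarith)]

theorem integral_incoming_le (hT : 0 < T)
    (h11 : ∀ t r, t ∈ Icc 0 T → r ∈ Ici (0 : ℝ) → 0 ≤ F11 t r)
    (h12 : ∀ t r, t ∈ Icc 0 T → r ∈ Ici (0 : ℝ) → 0 ≤ F12 t r)
    (hc11 : ContinuousOn (fun p : ℝ × ℝ => F11 p.1 p.2) (Icc 0 T ×ˢ Ici 0))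
    (hc12 : ContinuousOn (fun p : ℝ × ℝ => F12 p.1 p.2) (Icc 0 T ×ˢ Ici 0))
    (hd11 : ContDiffOn ℝ 1 (fun p : ℝ × ℝ => F11 p.1 p.2) (Ioo 0 T ×ˢ Ioi 0))
    (hd12 : ContDiffOn ℝ 1 (fun p : ℝ × ℝ => F12 p.1 p.2) (Ioo 0 T ×ˢ Ioi 0))
    (heq : ∀ t r, t ∈ Ioo 0 T → r ∈ Ioi (0 : ℝ) →
      pderivU F11 t r + pderivV F12 t r = G1 t r)
    (hbc : ∀ t ∈ Icc (0 : ℝ) T, F11 t 0 = F12 t 0)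
    (hInt : IntegrableOn (fun r => F11 0 r + F12 0 r) (Ioi 0))
    (hG : IntegrableOn (fun p : ℝ × ℝ => G1 p.1 p.2) (Icc 0 T ×ˢ Ioi 0)) {v : ℝ} (hv : 0 ≤ v) :
    ∫ t in (0 : ℝ)..min v T, F12 t (v - t) ≤
      (∫ r in Ioi (0 : ℝ), (F11 0 r + F12 0 r)) +
        ∫ p in Icc (0 : ℝ) T ×ˢ Ioi (0 : ℝ), |G1 p.1 p.2| := by
  set n := min v T
  have hnv : n ≤ v := min_le_left v T
  have hnT : n ≤ T := min_le_right v T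
  rcases (show 0 ≤ n from le_min hv hT.le).eq_or_lt with hn | hn
  · rw [← hn, intervalIntegral.integral_same]
    exact initialEnergy_add_source_nonneg hT.le h11 h12
  obtain ⟨δ, hδ, hnδ⟩ : ∃ δ > 0, 2 * δ ≤ n := ⟨n / 2, by linarith, by linarith⟩
  -- With `w = n - 2ε` the outgoing side shrinks to the corner `(n - ε, ε)`, so the trapezoid is
  -- bounded by `t = ε`, `r = ε`, `t = n - ε` and the incoming ray.
  have hε : ∀ ε ∈ Ioc 0 δ, ∫ t in ε..(n - ε), F12 t (v - t) ≤
      (∫ p in Icc (0 : ℝ) T ×ˢ Ioi (0 : ℝ), |G1 p.1 p.2|) +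
        (∫ t in ε..(n - ε), (F12 t ε - F11 t ε) / 2) +
          ∫ r in ε..(v - ε), (F11 ε r + F12 ε r) / 2 := by
    intro ε hε
    have h := integral_outgoing_add_integral_incoming_le (a := ε) (b := n - ε) (ρ := ε)
      (w := n - 2 * ε) (v := v) h11 h12 hd11 hd12 heq hG hε.1 hε.1 (by linarith [hε.1])
      (by linarith [hε.2]) (by linarith) (by linarith)
    rwa [show n - 2 * ε + ε = n - ε by ring, intervalIntegral.integral_same, zero_add] at h
  have hL : ContinuousOn (fun ε => ∫ t in ε..(n - ε), F12 t (v - t)) (Icc 0 δ) :=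
    continuousOn_intervalIntegral_comp (γ := fun _ t => (t, v - t)) hT.le hc12 (by fun_prop)
      (by fun_prop) (by fun_prop) fun ε hε t ht => by
        rw [uIcc_of_le (by linarith [hε.2])] at ht
        exact mk_mem_prod ⟨by linarith [hε.1, ht.1], by linarith [hε.1, ht.2]⟩
          (mem_Ici.2 (by linarith [hε.1, ht.2]))
  have hA : ContinuousOn (fun ε => ∫ t in ε..(n - ε), (F12 t ε - F11 t ε) / 2) (Icc 0 δ) :=
    continuousOn_intervalIntegral_comp (f := fun p => (F12 p.1 p.2 - F11 p.1 p.2) / 2)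
      (γ := fun ε t => (t, ε)) hT.le ((hc12.sub hc11).div_const 2) (by fun_prop)
      (by fun_prop) (by fun_prop) fun ε hε t ht => by
        rw [uIcc_of_le (by linarith [hε.2])] at ht
        exact mk_mem_prod ⟨by linarith [hε.1, ht.1], by linarith [hε.1, ht.2]⟩ (mem_Ici.2 hε.1)
  have hB : ContinuousOn (fun ε => ∫ r in ε..(v - ε), (F11 ε r + F12 ε r) / 2) (Icc 0 δ) :=
    continuousOn_intervalIntegral_comp (f := fun p => (F11 p.1 p.2 + F12 p.1 p.2) / 2)
      (γ := fun ε r => (ε, r)) hT.le ((hc11.add hc12).div_const 2) (by fun_prop)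
      (by fun_prop) (by fun_prop) fun ε hε r hr => by
        rw [uIcc_of_le (by linarith [hε.2])] at hr
        exact mk_mem_prod ⟨hε.1, by linarith [hε.2]⟩ (mem_Ici.2 (by linarith [hε.1, hr.1]))
  have h₀ := le_of_forall_Ioc_le_of_continuousOn hδ hL ((continuousOn_const.add hA).add hB) hε
  simp only [Pi.add_apply, sub_zero, integral_flux_axis_eq_zero hbc hn.le hnT] at h₀
  linarith [integral_initialEnergy_le hT.le h11 h12 hInt le_rfl hv]

end NullSystem

/-- Lemma 3.1, first pair of estimates: integrals of the nonnegative null-transported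
densities `F11`, `F12` along outgoing/incoming null rays are controlled by the data at
`t = 0` and the spacetime integral of the source `G1`. -/
theorem stmt_0 :
    ∃ C : ℝ, 0 < C ∧
      ∀ (T : ℝ) (F11 F12 G1 : ℝ → ℝ → ℝ),
        0 < T →
        (∀ t r, t ∈ Icc 0 T → r ∈ Ici (0 : ℝ) → 0 ≤ F11 t r) →
        (∀ t r, t ∈ Icc 0 T → r ∈ Ici (0 : ℝ) → 0 ≤ F12 t r) →
        ContinuousOn (fun p : ℝ × ℝ => F11 p.1 p.2) (Icc 0 T ×ˢ Ici 0) →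
        ContinuousOn (fun p : ℝ × ℝ => F12 p.1 p.2) (Icc 0 T ×ˢ Ici 0) →
        ContinuousOn (fun p : ℝ × ℝ => G1 p.1 p.2) (Icc 0 T ×ˢ Ici 0) →
        ContDiffOn ℝ 1 (fun p : ℝ × ℝ => F11 p.1 p.2) (Ioo 0 T ×ˢ Ioi 0) →
        ContDiffOn ℝ 1 (fun p : ℝ × ℝ => F12 p.1 p.2) (Ioo 0 T ×ˢ Ioi 0) →
        (∀ t r, t ∈ Ioo 0 T → r ∈ Ioi (0 : ℝ) →
          pderivU F11 t r + pderivV F12 t r = G1 t r) →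
        (∀ t ∈ Icc (0 : ℝ) T, F11 t 0 = F12 t 0) →
        IntegrableOn (fun r => F11 0 r + F12 0 r) (Ioi 0) →
        IntegrableOn (fun p : ℝ × ℝ => G1 p.1 p.2) (Icc 0 T ×ˢ Ioi 0) →
        ((∀ u ≤ T, (∫ t in (max u 0)..T, F11 t (t - u)) ≤
            C * ((∫ r in Ioi (0 : ℝ), (F11 0 r + F12 0 r)) +
              ∫ p in Icc (0 : ℝ) T ×ˢ Ioi (0 : ℝ), |G1 p.1 p.2|)) ∧
         (∀ v, 0 ≤ v → (∫ t in (0 : ℝ)..min v T, F12 t (v - t)) ≤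
            C * ((∫ r in Ioi (0 : ℝ), (F11 0 r + F12 0 r)) +
              ∫ p in Icc (0 : ℝ) T ×ˢ Ioi (0 : ℝ), |G1 p.1 p.2|))) := by
  refine ⟨1, one_pos, fun T F11 F12 G1 hT h11 h12 hc11 hc12 _ hd11 hd12 heq hbc hInt hG =>
    ⟨fun u hu => ?_, fun v hv => ?_⟩⟩ <;> rw [one_mul]
  · exact integral_outgoing_le hT h11 h12 hc11 hc12 hd11 hd12 heq hbc hInt hG hu
  · exact integral_incoming_le hT h11 h12 hc11 hc12 hd11 hd12 heq hbc hInt hG hv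
end

section
/- Let n ≥ 1, α ∈ ℝ, and let Φ : I × (0,∞) → ℝⁿ be twice continuously differentiable (I an open interval) satisfying the orthogonality relation Φ_t(t,r) · (Φ_tt(t,r) − Φ_rr(t,r) − Φ_r(t,r)/r) = 0 at every point. Define Φ_u := (1/2)(Φ_t − Φ_r) and Φ_v := (1/2)(Φ_t + Φ_r), and for a scalar function h of (t,r) set ∂_u h := (1/2)(∂_t h − ∂_r h), ∂_v h := (1/2)(∂_t h + ∂_r h). Then at every (t,r) with r > 0: ∂_u [ r^{1−α} |Φ_v|² ] + ∂_v [ r^{1−α} |Φ_u|² ] = (α/2) r^{−α} ( |Φ_v|² − |Φ_u|² ). -/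
open MeasureTheory Set RealInnerProductSpace

/-!
Since mixed partials of a `C²` map commute, `∂_u ∂_v Φ = ∂_v ∂_u Φ = (Φ_tt − Φ_rr)/4`. Hence the
unweighted part of the left-hand side is `r^{1−α} (Φ_u + Φ_v) · (Φ_tt − Φ_rr) / 2
= r^{1−α} Φ_t · (Φ_tt − Φ_rr) / 2`, which the orthogonality relation turns into
`r^{−α} Φ_t · Φ_r / 2 = r^{−α} (|Φ_v|² − |Φ_u|²) / 2`. Differentiating the weight contributes
`−(1 − α) r^{−α} (|Φ_v|² − |Φ_u|²) / 2`, and the two add up to the right-hand side.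
-/

open Function

section PartialDerivatives

variable {E : Type*} [NormedAddCommGroup E] [NormedSpace ℝ E] {f : ℝ → ℝ → E} {t r : ℝ}

theorem HasFDerivAt.hasDerivAt_apply_left {f' : ℝ × ℝ →L[ℝ] E} (h : HasFDerivAt ↿f f' (t, r)) :
    HasDerivAt (fun s => f s r) (f' (1, 0)) t :=
  HasFDerivAt.comp_hasDerivAt (l := ↿f) t h ((hasDerivAt_id t).prodMk (hasDerivAt_const t r))

theorem HasFDerivAt.hasDerivAt_apply_right {f' : ℝ × ℝ →L[ℝ] E} (h : HasFDerivAt ↿f f' (t, r)) :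
    HasDerivAt (f t) (f' (0, 1)) r :=
  HasFDerivAt.comp_hasDerivAt (l := ↿f) r h ((hasDerivAt_const r t).prodMk (hasDerivAt_id r))

theorem HasFDerivAt.pderivT_eq {f' : ℝ × ℝ →L[ℝ] E} (h : HasFDerivAt ↿f f' (t, r)) :
    pderivT f t r = f' (1, 0) :=
  h.hasDerivAt_apply_left.deriv

theorem HasFDerivAt.pderivR_eq {f' : ℝ × ℝ →L[ℝ] E} (h : HasFDerivAt ↿f f' (t, r)) :
    pderivR f t r = f' (0, 1) :=
  h.hasDerivAt_apply_right.deriv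

theorem hasFDerivAt_fderiv_apply {p : ℝ × ℝ} (h : ContDiffAt ℝ 2 ↿f p) (e : ℝ × ℝ) :
    HasFDerivAt (fun q => fderiv ℝ ↿f q e) ((fderiv ℝ (fderiv ℝ ↿f) p).flip e) p := by
  have hD : HasFDerivAt (fderiv ℝ ↿f) (fderiv ℝ (fderiv ℝ ↿f) p) p :=
    ((h.fderiv_right (m := 1) le_rfl).differentiableAt one_ne_zero).hasFDerivAt
  simpa using hD.clm_apply (hasFDerivAt_const e p)

theorem hasFDerivAt_uncurry_pderivT {p : ℝ × ℝ} (h : ContDiffAt ℝ 2 ↿f p) :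
    HasFDerivAt ↿(pderivT f) ((fderiv ℝ (fderiv ℝ ↿f) p).flip (1, 0)) p := by
  refine (hasFDerivAt_fderiv_apply h (1, 0)).congr_of_eventuallyEq ?_
  filter_upwards [h.eventually (by simp)] with q hq
  exact (hq.differentiableAt two_ne_zero).hasFDerivAt.pderivT_eq

theorem hasFDerivAt_uncurry_pderivR {p : ℝ × ℝ} (h : ContDiffAt ℝ 2 ↿f p) :
    HasFDerivAt ↿(pderivR f) ((fderiv ℝ (fderiv ℝ ↿f) p).flip (0, 1)) p := by
  refine (hasFDerivAt_fderiv_apply h (0, 1)).congr_of_eventuallyEq ?_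
  filter_upwards [h.eventually (by simp)] with q hq
  exact (hq.differentiableAt two_ne_zero).hasFDerivAt.pderivR_eq

theorem hasFDerivAt_uncurry_pderivU {p : ℝ × ℝ} (h : ContDiffAt ℝ 2 ↿f p) :
    HasFDerivAt ↿(pderivU f)
      ((2 : ℝ)⁻¹ • ((fderiv ℝ (fderiv ℝ ↿f) p).flip (1, 0)
        - (fderiv ℝ (fderiv ℝ ↿f) p).flip (0, 1))) p :=
  ((hasFDerivAt_uncurry_pderivT h).sub (hasFDerivAt_uncurry_pderivR h)).const_smul _

theorem hasFDerivAt_uncurry_pderivV {p : ℝ × ℝ} (h : ContDiffAt ℝ 2 ↿f p) :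
    HasFDerivAt ↿(pderivV f)
      ((2 : ℝ)⁻¹ • ((fderiv ℝ (fderiv ℝ ↿f) p).flip (1, 0)
        + (fderiv ℝ (fderiv ℝ ↿f) p).flip (0, 1))) p :=
  ((hasFDerivAt_uncurry_pderivT h).add (hasFDerivAt_uncurry_pderivR h)).const_smul _

theorem pderivU_pderivV (h : ContDiffAt ℝ 2 ↿f (t, r)) :
    pderivU (pderivV f) t r = (4 : ℝ)⁻¹ • (pderivT (pderivT f) t r - pderivR (pderivR f) t r) := by
  have hsymm := h.isSymmSndFDerivAt (by simp) (1, 0) (0, 1)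
  rw [pderivU, (hasFDerivAt_uncurry_pderivV h).pderivT_eq,
    (hasFDerivAt_uncurry_pderivV h).pderivR_eq, (hasFDerivAt_uncurry_pderivT h).pderivT_eq,
    (hasFDerivAt_uncurry_pderivR h).pderivR_eq]
  simp only [smul_apply, add_apply, ContinuousLinearMap.flip_apply, hsymm]
  module

theorem pderivV_pderivU (h : ContDiffAt ℝ 2 ↿f (t, r)) :
    pderivV (pderivU f) t r = (4 : ℝ)⁻¹ • (pderivT (pderivT f) t r - pderivR (pderivR f) t r) := by
  have hsymm := h.isSymmSndFDerivAt (by simp) (1, 0) (0, 1)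
  rw [pderivV, (hasFDerivAt_uncurry_pderivU h).pderivT_eq,
    (hasFDerivAt_uncurry_pderivU h).pderivR_eq, (hasFDerivAt_uncurry_pderivT h).pderivT_eq,
    (hasFDerivAt_uncurry_pderivR h).pderivR_eq]
  simp only [smul_apply, sub_apply, ContinuousLinearMap.flip_apply, hsymm]
  module

end PartialDerivatives

section NullEnergy

variable {F : Type*} [NormedAddCommGroup F] [InnerProductSpace ℝ F] {g : ℝ → ℝ → F}
  {w : ℝ → ℝ} {w' t r : ℝ}

theorem pderivT_mul_norm_sq (hg : DifferentiableAt ℝ ↿g (t, r)) :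
    pderivT (fun t r => w r * ‖g t r‖ ^ 2) t r = 2 * w r * ⟪g t r, pderivT g t r⟫ := by
  rw [hg.hasFDerivAt.pderivT_eq]
  exact (hg.hasFDerivAt.hasDerivAt_apply_left.norm_sq.const_mul (w r)).deriv.trans (by ring)

theorem pderivR_mul_norm_sq (hw : HasDerivAt w w' r) (hg : DifferentiableAt ℝ ↿g (t, r)) :
    pderivR (fun t r => w r * ‖g t r‖ ^ 2) t r
      = 2 * w r * ⟪g t r, pderivR g t r⟫ + w' * ‖g t r‖ ^ 2 := by
  rw [hg.hasFDerivAt.pderivR_eq]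
  exact (hw.mul hg.hasFDerivAt.hasDerivAt_apply_right.norm_sq).deriv.trans (by ring)

theorem pderivU_mul_norm_sq (hw : HasDerivAt w w' r) (hg : DifferentiableAt ℝ ↿g (t, r)) :
    pderivU (fun t r => w r * ‖g t r‖ ^ 2) t r
      = 2 * w r * ⟪g t r, pderivU g t r⟫ - w' / 2 * ‖g t r‖ ^ 2 := by
  rw [pderivU, pderivU, pderivT_mul_norm_sq hg, pderivR_mul_norm_sq hw hg, inner_smul_right,
    inner_sub_right, smul_eq_mul]
  ring

theorem pderivV_mul_norm_sq (hw : HasDerivAt w w' r) (hg : DifferentiableAt ℝ ↿g (t, r)) :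
    pderivV (fun t r => w r * ‖g t r‖ ^ 2) t r
      = 2 * w r * ⟪g t r, pderivV g t r⟫ + w' / 2 * ‖g t r‖ ^ 2 := by
  rw [pderivV, pderivV, pderivT_mul_norm_sq hg, pderivR_mul_norm_sq hw hg, inner_smul_right,
    inner_add_right, smul_eq_mul]
  ring

theorem norm_sq_pderivV_sub_norm_sq_pderivU (f : ℝ → ℝ → F) (t r : ℝ) :
    ‖pderivV f t r‖ ^ 2 - ‖pderivU f t r‖ ^ 2 = ⟪pderivT f t r, pderivR f t r⟫ := by
  simp only [pderivU, pderivV, norm_smul, mul_pow, norm_add_sq_real, norm_sub_sq_real]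
  norm_num
  ring

end NullEnergy

theorem stmt_6_general (n : ℕ) (α : ℝ) (a b : ℝ)
    (Φ : ℝ → ℝ → EuclideanSpace ℝ (Fin n))
    (hΦ : ContDiffOn ℝ 2 (fun p : ℝ × ℝ => Φ p.1 p.2) (Ioo a b ×ˢ Ioi 0))
    (horth : ∀ t ∈ Ioo a b, ∀ r : ℝ, 0 < r →
      ⟪pderivT Φ t r,
        pderivT (pderivT Φ) t r - pderivR (pderivR Φ) t r - r⁻¹ • pderivR Φ t r⟫ = 0) :
    ∀ t ∈ Ioo a b, ∀ r : ℝ, 0 < r →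
      pderivU (fun t' r' => r' ^ (1 - α) * ‖pderivV Φ t' r'‖ ^ 2) t r
        + pderivV (fun t' r' => r' ^ (1 - α) * ‖pderivU Φ t' r'‖ ^ 2) t r
      = (α / 2) * r ^ (-α) * (‖pderivV Φ t r‖ ^ 2 - ‖pderivU Φ t r‖ ^ 2) := by
  intro t ht r hr
  have hΦ₂ : ContDiffAt ℝ 2 ↿Φ (t, r) :=
    hΦ.contDiffAt ((isOpen_Ioo.prod isOpen_Ioi).mem_nhds ⟨ht, hr⟩)
  have hw : HasDerivAt (fun ρ : ℝ => ρ ^ (1 - α)) ((1 - α) * r ^ (-α)) r := by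
    simpa using Real.hasDerivAt_rpow_const (p := 1 - α) (Or.inl hr.ne')
  have hwave : ⟪pderivU Φ t r, pderivT (pderivT Φ) t r - pderivR (pderivR Φ) t r⟫
      + ⟪pderivV Φ t r, pderivT (pderivT Φ) t r - pderivR (pderivR Φ) t r⟫
      = r⁻¹ * (‖pderivV Φ t r‖ ^ 2 - ‖pderivU Φ t r‖ ^ 2) := by
    have hsum : pderivU Φ t r + pderivV Φ t r = pderivT Φ t r := by
      simp only [pderivU, pderivV]; module
    rw [← inner_add_left, hsum, norm_sq_pderivV_sub_norm_sq_pderivU]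
    simpa [inner_sub_right, real_inner_smul_right, sub_eq_zero] using horth t ht r hr
  have hweight : r ^ (1 - α) * r⁻¹ = r ^ (-α) := by
    rw [Real.rpow_sub hr, Real.rpow_one, Real.rpow_neg hr.le]
    field_simp
  rw [pderivU_mul_norm_sq hw (hasFDerivAt_uncurry_pderivV hΦ₂).differentiableAt,
    pderivV_mul_norm_sq hw (hasFDerivAt_uncurry_pderivU hΦ₂).differentiableAt,
    pderivU_pderivV hΦ₂, pderivV_pderivU hΦ₂, real_inner_smul_right, real_inner_smul_right]
  linear_combination (r ^ (1 - α) / 2) * hwave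
    + (‖pderivV Φ t r‖ ^ 2 - ‖pderivU Φ t r‖ ^ 2) / 2 * hweight

/-- Weighted null energy identity for radially symmetric wave maps:
if `Φ_t ⟂ (Φ_tt − Φ_rr − Φ_r/r)`, then
`∂_u[r^{1−α}|Φ_v|²] + ∂_v[r^{1−α}|Φ_u|²] = (α/2) r^{−α}(|Φ_v|² − |Φ_u|²)`. -/
theorem stmt_6 (n : ℕ) (hn : 1 ≤ n) (α : ℝ) (a b : ℝ)
    (Φ : ℝ → ℝ → EuclideanSpace ℝ (Fin n))
    (hΦ : ContDiffOn ℝ 2 (fun p : ℝ × ℝ => Φ p.1 p.2) (Ioo a b ×ˢ Ioi 0))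
    (horth : ∀ t ∈ Ioo a b, ∀ r : ℝ, 0 < r →
      ⟪pderivT Φ t r,
        pderivT (pderivT Φ) t r - pderivR (pderivR Φ) t r - r⁻¹ • pderivR Φ t r⟫ = 0) :
    ∀ t ∈ Ioo a b, ∀ r : ℝ, 0 < r →
      pderivU (fun t' r' => r' ^ (1 - α) * ‖pderivV Φ t' r'‖ ^ 2) t r
        + pderivV (fun t' r' => r' ^ (1 - α) * ‖pderivU Φ t' r'‖ ^ 2) t r
      = (α / 2) * r ^ (-α) * (‖pderivV Φ t r‖ ^ 2 - ‖pderivU Φ t r‖ ^ 2) :=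
  stmt_6_general n α a b Φ hΦ horth
end

section
/- Let α, σ ∈ ℝ with 1 + α − 2σ > 0, and let f : (0,∞) → [0,∞) be measurable. Then the weighted Hardy inequality holds: ∫₀^∞ r^{2σ−2−α} ( ∫₀^r ξ^{−σ} f(ξ) dξ )² dr ≤ ( 2/(1+α−2σ) )² ∫₀^∞ r^{−α} f(r)² dr. -/
/-!
Write `b = (1 + α - 2σ) / 2 > 0`. Cauchy–Schwarz against the weight `ξ^(b-1)`, whose
integral over `(0, r]` is `r^b / b`, bounds the inner integral squared by
`(r^b / b) ∫₀^r ξ^(1-b-2σ) f(ξ)² dξ`. The outer weight `r^(2σ-2-α) = r^(-1-2b)` then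
leaves `(1/b) r^(-1-b)`, and after exchanging the order of integration the tail integral
`∫_ξ^∞ r^(-1-b) dr = ξ^(-b) / b` turns `ξ^(1-b-2σ)` into `ξ^(-α)` and produces the
second factor `1/b`.
-/

open MeasureTheory Set

lemma ENNReal.ofReal_rpow_mul_ofReal_rpow {x : ℝ} (hx : 0 < x) (p q : ℝ) :
    ENNReal.ofReal (x ^ p) * ENNReal.ofReal (x ^ q) = ENNReal.ofReal (x ^ (p + q)) := by
  rw [← ENNReal.ofReal_mul (Real.rpow_nonneg hx.le p), Real.rpow_add hx]

lemma ENNReal.sq_lintegral_mul_le {α : Type*} [MeasurableSpace α] {μ : Measure α}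
    {g h : α → ENNReal} (hg : AEMeasurable g μ) (hh : AEMeasurable h μ) :
    (∫⁻ x, g x * h x ∂μ) ^ 2 ≤ (∫⁻ x, g x ^ 2 ∂μ) * ∫⁻ x, h x ^ 2 ∂μ := by
  calc (∫⁻ x, g x * h x ∂μ) ^ 2
      ≤ ((∫⁻ x, g x ^ (2 : ℝ) ∂μ) ^ (1 / 2 : ℝ) *
          (∫⁻ x, h x ^ (2 : ℝ) ∂μ) ^ (1 / 2 : ℝ)) ^ 2 :=
        pow_le_pow_left' (ENNReal.lintegral_mul_le_Lp_mul_Lq μ .two_two hg hh) 2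
    _ = (∫⁻ x, g x ^ 2 ∂μ) * ∫⁻ x, h x ^ 2 ∂μ := by
        rw [mul_pow, ← ENNReal.rpow_natCast (_ ^ (1 / 2 : ℝ)),
          ← ENNReal.rpow_natCast (_ ^ (1 / 2 : ℝ)), ← ENNReal.rpow_mul, ← ENNReal.rpow_mul]
        norm_num [ENNReal.rpow_two]

lemma lintegral_Ioc_zero_ofReal_rpow_sub_one {b r : ℝ} (hb : 0 < b) (hr : 0 < r) :
    ∫⁻ ξ in Ioc 0 r, ENNReal.ofReal (ξ ^ (b - 1)) = ENNReal.ofReal (r ^ b / b) := by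
  have hint : IntegrableOn (fun ξ : ℝ => ξ ^ (b - 1)) (Ioc 0 r) := by
    rw [← intervalIntegrable_iff_integrableOn_Ioc_of_le hr.le]
    exact intervalIntegral.intervalIntegrable_rpow' (by linarith)
  rw [← ofReal_integral_eq_lintegral_ofReal hint
    (ae_restrict_of_forall_mem measurableSet_Ioc fun ξ hξ => Real.rpow_nonneg hξ.1.le _),
    ← intervalIntegral.integral_of_le hr.le, integral_rpow (.inl (by linarith)),
    Real.zero_rpow (by linarith), sub_add_cancel, sub_zero]

lemma lintegral_Ici_ofReal_rpow_neg_one_sub {b ξ : ℝ} (hb : 0 < b) (hξ : 0 < ξ) :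
    ∫⁻ r in Ici ξ, ENNReal.ofReal (r ^ (-1 - b)) = ENNReal.ofReal (ξ ^ (-b) / b) := by
  have hc : -1 - b < -1 := by linarith
  rw [setLIntegral_congr Ioi_ae_eq_Ici.symm,
    ← ofReal_integral_eq_lintegral_ofReal (integrableOn_Ioi_rpow_of_lt hc hξ)
      (ae_restrict_of_forall_mem measurableSet_Ioi fun r hr =>
        Real.rpow_nonneg (hξ.trans hr).le _),
    integral_Ioi_rpow_of_lt hc hξ]
  congr 1
  rw [show -1 - b + 1 = -b by ring, neg_div, div_neg, neg_neg]

lemma lintegral_Ioi_mul_lintegral_Ioc {K G : ℝ → ENNReal} (hK : Measurable K)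
    (hG : Measurable G) (a : ℝ) :
    ∫⁻ r in Ioi a, K r * ∫⁻ ξ in Ioc a r, G ξ =
      ∫⁻ ξ in Ioi a, G ξ * ∫⁻ r in Ici ξ, K r := by
  set F : ℝ × ℝ → ENNReal := {q | q.2 ≤ q.1}.indicator fun q => K q.1 * G q.2
  have hF : Measurable F :=
    ((hK.comp measurable_fst).mul (hG.comp measurable_snd)).indicator
      (measurableSet_le measurable_snd measurable_fst)
  have hF_fst (r : ℝ) : (fun ξ => F (r, ξ)) = (Iic r).indicator fun ξ => K r * G ξ := by
    ext ξ; simp [F, indicator_apply]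
  have hF_snd (ξ : ℝ) : (fun r => F (r, ξ)) = (Ici ξ).indicator fun r => K r * G ξ := by
    ext r; simp [F, indicator_apply]
  calc ∫⁻ r in Ioi a, K r * ∫⁻ ξ in Ioc a r, G ξ
      = ∫⁻ r in Ioi a, ∫⁻ ξ in Ioi a, F (r, ξ) := by
        refine lintegral_congr fun r => ?_
        rw [hF_fst, lintegral_indicator measurableSet_Iic,
          Measure.restrict_restrict measurableSet_Iic, Iic_inter_Ioi, lintegral_const_mul _ hG]
    _ = ∫⁻ ξ in Ioi a, ∫⁻ r in Ioi a, F (r, ξ) := lintegral_lintegral_swap hF.aemeasurable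
    _ = ∫⁻ ξ in Ioi a, G ξ * ∫⁻ r in Ici ξ, K r := by
        refine setLIntegral_congr_fun measurableSet_Ioi fun ξ hξ => ?_
        rw [hF_snd, lintegral_indicator measurableSet_Ici,
          Measure.restrict_restrict measurableSet_Ici,
          inter_eq_left.mpr (Ici_subset_Ioi.mpr hξ), lintegral_mul_const _ hK, mul_comm]

lemma sq_lintegral_Ioc_ofReal_rpow_mul_le {b σ r : ℝ} (hb : 0 < b) (hr : 0 < r)
    {f : ℝ → ENNReal} (hf : Measurable f) :
    (∫⁻ ξ in Ioc 0 r, ENNReal.ofReal (ξ ^ (-σ)) * f ξ) ^ 2 ≤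
      ENNReal.ofReal (r ^ b / b) *
        ∫⁻ ξ in Ioc 0 r, ENNReal.ofReal (ξ ^ (1 - b - 2 * σ)) * f ξ ^ 2 := by
  have hsplit : ∫⁻ ξ in Ioc 0 r, ENNReal.ofReal (ξ ^ (-σ)) * f ξ =
      ∫⁻ ξ in Ioc 0 r, ENNReal.ofReal (ξ ^ ((b - 1) / 2)) *
        (ENNReal.ofReal (ξ ^ ((1 - b) / 2 - σ)) * f ξ) := by
    refine setLIntegral_congr_fun measurableSet_Ioc fun ξ hξ => ?_
    rw [← mul_assoc, ENNReal.ofReal_rpow_mul_ofReal_rpow hξ.1]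
    ring_nf
  rw [hsplit, ← lintegral_Ioc_zero_ofReal_rpow_sub_one hb hr]
  refine (ENNReal.sq_lintegral_mul_le (by fun_prop) (by fun_prop)).trans_eq ?_
  congr 1 <;> refine setLIntegral_congr_fun measurableSet_Ioc fun ξ hξ => ?_
  · rw [sq, ENNReal.ofReal_rpow_mul_ofReal_rpow hξ.1]
    ring_nf
  · rw [mul_pow, sq (ENNReal.ofReal _), ENNReal.ofReal_rpow_mul_ofReal_rpow hξ.1]
    ring_nf

theorem lintegral_Ioi_ofReal_rpow_mul_sq_lintegral_Ioc_le {b σ : ℝ} (hb : 0 < b)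
    {f : ℝ → ENNReal} (hf : Measurable f) :
    ∫⁻ r in Ioi 0, ENNReal.ofReal (r ^ (-1 - 2 * b)) *
        (∫⁻ ξ in Ioc 0 r, ENNReal.ofReal (ξ ^ (-σ)) * f ξ) ^ 2
      ≤ ENNReal.ofReal (1 / b) ^ 2 *
          ∫⁻ ξ in Ioi 0, ENNReal.ofReal (ξ ^ (1 - 2 * b - 2 * σ)) * f ξ ^ 2 := by
  set G : ℝ → ENNReal := fun ξ => ENNReal.ofReal (ξ ^ (1 - b - 2 * σ)) * f ξ ^ 2
  calc _ ≤ ∫⁻ r in Ioi 0, ENNReal.ofReal (1 / b) *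
          (ENNReal.ofReal (r ^ (-1 - b)) * ∫⁻ ξ in Ioc 0 r, G ξ) := by
        refine setLIntegral_mono' measurableSet_Ioi fun r (hr : 0 < r) => ?_
        have hweight : r ^ (-1 - 2 * b) * (r ^ b / b) = 1 / b * r ^ (-1 - b) := by
          rw [mul_div_assoc', ← Real.rpow_add hr]
          ring_nf
        grw [sq_lintegral_Ioc_ofReal_rpow_mul_le hb hr hf]
        rw [← mul_assoc, ← ENNReal.ofReal_mul (by positivity), hweight,
          ENNReal.ofReal_mul (by positivity), mul_assoc]
    _ = ENNReal.ofReal (1 / b) *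
          ∫⁻ ξ in Ioi 0, G ξ * ∫⁻ r in Ici ξ, ENNReal.ofReal (r ^ (-1 - b)) := by
        rw [lintegral_const_mul' _ _ ENNReal.ofReal_ne_top,
          lintegral_Ioi_mul_lintegral_Ioc (by fun_prop) (by fun_prop)]
    _ = ENNReal.ofReal (1 / b) * ∫⁻ ξ in Ioi 0,
          ENNReal.ofReal (1 / b) * (ENNReal.ofReal (ξ ^ (1 - 2 * b - 2 * σ)) * f ξ ^ 2) := by
        congr 1
        refine setLIntegral_congr_fun measurableSet_Ioi fun ξ (hξ : 0 < ξ) => ?_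
        have hweight : ENNReal.ofReal (ξ ^ (1 - b - 2 * σ)) * ENNReal.ofReal (ξ ^ (-b)) =
            ENNReal.ofReal (ξ ^ (1 - 2 * b - 2 * σ)) := by
          rw [ENNReal.ofReal_rpow_mul_ofReal_rpow hξ]
          ring_nf
        rw [lintegral_Ici_ofReal_rpow_neg_one_sub hb hξ, div_eq_mul_one_div,
          ENNReal.ofReal_mul (by positivity), ← hweight]
        ring
    _ = _ := by rw [lintegral_const_mul' _ _ ENNReal.ofReal_ne_top, ← mul_assoc, ← sq]

/-- Weighted Hardy inequality: for `1 + α − 2σ > 0` and measurable `f ≥ 0`,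
`∫₀^∞ r^{2σ−2−α} (∫₀^r ξ^{−σ} f(ξ) dξ)² dr ≤ (2/(1+α−2σ))² ∫₀^∞ r^{−α} f(r)² dr`,
both sides being allowed to be infinite. -/
theorem stmt_9 (α σ : ℝ) (h : 0 < 1 + α - 2 * σ)
    (f : ℝ → ENNReal) (hf : Measurable f) :
    ∫⁻ r in Ioi (0 : ℝ),
        ENNReal.ofReal (r ^ (2 * σ - 2 - α)) *
          (∫⁻ ξ in Ioc (0 : ℝ) r, ENNReal.ofReal (ξ ^ (-σ)) * f ξ) ^ 2
      ≤ ENNReal.ofReal ((2 / (1 + α - 2 * σ)) ^ 2) *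
          ∫⁻ r in Ioi (0 : ℝ), ENNReal.ofReal (r ^ (-α)) * (f r) ^ 2 := by
  obtain ⟨b, hb, rfl⟩ : ∃ b, 0 < b ∧ α = 2 * b + 2 * σ - 1 :=
    ⟨(1 + α - 2 * σ) / 2, half_pos h, by ring⟩
  convert lintegral_Ioi_ofReal_rpow_mul_sq_lintegral_Ioc_le (σ := σ) hb hf using 4
  · ring_nf
  · rw [ENNReal.ofReal_pow (by positivity)]
    ring_nf
  · ring_nf
end

section
/- Let n ≥ 1 and let β satisfy 1/10 ≤ β ≤ 1/4. There exists a constant C = C(β) > 0 such that for every continuously differentiable compactly supported function Ψ : (0,∞) → ℝⁿ the following Sobolev–Hardy interpolation inequality holds: ∫₀^∞ |Ψ(r)|⁴ r^β dr ≤ C ( ∫₀^∞ |Ψ(r)|² r^{−β} dr ) · ( ∫₀^∞ |Ψ(r)|² r dr )^{β} · ( ∫₀^∞ |Ψ'(r)|² r dr )^{1−β}. -/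
/-!
Let `A`, `B`, `D` be the three integrals on the right and `M = sup_{r > 0} |Ψ r|² r^{2β}`,
attained at some `r₀ > 0`. Writing `|Ψ|⁴ r^β = (|Ψ|² r^{-β}) (|Ψ|² r^{2β})` gives
`∫ |Ψ|⁴ r^β ≤ A M`. By the fundamental theorem of calculus applied to `|Ψ|²` on `(r₀, ∞)` and
Cauchy–Schwarz with the weights `1/r` and `r`, `|Ψ r₀|⁴ ≤ 4 (∫_{r₀}^∞ |Ψ|² / r) D`. Bounding the
remaining integral once by `|Ψ r|² ≤ M r^{-2β}` and once by `1/r ≤ r / r₀²` yields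
`|Ψ r₀|² ≤ (2/β) D` and `|Ψ r₀|⁴ r₀² ≤ 4 B D`. With `a = |Ψ r₀|²` we have
`M = a^{1-2β} (a² r₀²)^β`, so the two bounds combine to `M ≤ (2/β)^{1-2β} 4^β B^β D^{1-β}`,
in which `r₀` no longer appears.
-/

open MeasureTheory Set Filter Topology
open scoped RealInnerProductSpace

theorem sq_integral_mul_le_integral_sq_mul_integral_sq {α : Type*} [MeasurableSpace α]
    {μ : Measure α} {f g : α → ℝ} (hf₀ : 0 ≤ᵐ[μ] f) (hg₀ : 0 ≤ᵐ[μ] g)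
    (hf : MemLp f 2 μ) (hg : MemLp g 2 μ) :
    (∫ a, f a * g a ∂μ) ^ 2 ≤ (∫ a, f a ^ 2 ∂μ) * ∫ a, g a ^ 2 ∂μ := by
  have hHolder := integral_mul_le_Lp_mul_Lq_of_nonneg Real.HolderConjugate.two_two hf₀ hg₀
    (by simpa using hf) (by simpa using hg)
  simp only [Real.rpow_two, ← Real.sqrt_eq_rpow] at hHolder
  have h₀ : 0 ≤ ∫ a, f a * g a ∂μ :=
    integral_nonneg_of_ae (by filter_upwards [hf₀, hg₀] with a ha hb using mul_nonneg ha hb)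
  calc (∫ a, f a * g a ∂μ) ^ 2 ≤ (√(∫ a, f a ^ 2 ∂μ) * √(∫ a, g a ^ 2 ∂μ)) ^ 2 := by gcongr
    _ = _ := by
      rw [mul_pow, Real.sq_sqrt (integral_nonneg fun a ↦ sq_nonneg _),
        Real.sq_sqrt (integral_nonneg fun a ↦ sq_nonneg _)]

theorem Real.mul_rpow_le_of_le_of_sq_mul_sq_le {a r X Y θ : ℝ} (ha : 0 ≤ a) (hr : 0 ≤ r)
    (hθ : 0 ≤ θ) (hθ' : 2 * θ ≤ 1) (hX : a ≤ X) (hY : a ^ 2 * r ^ 2 ≤ Y) :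
    a * r ^ (2 * θ) ≤ X ^ (1 - 2 * θ) * Y ^ θ :=
  calc a * r ^ (2 * θ) = a ^ (1 - 2 * θ) * (a ^ 2 * r ^ 2) ^ θ := by
        rw [Real.mul_rpow (by positivity) (by positivity), ← Real.rpow_natCast a,
          ← Real.rpow_natCast r, ← Real.rpow_mul ha, ← Real.rpow_mul hr, ← mul_assoc,
          ← Real.rpow_add' ha (by norm_num)]
        norm_num
    _ ≤ X ^ (1 - 2 * θ) * Y ^ θ := by
        have : 0 ≤ 1 - 2 * θ := by linarith
        have : 0 ≤ X := ha.trans hX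
        gcongr

theorem Continuous.mul_continuousOn_of_tsupport_subset {α : Type*} [TopologicalSpace α]
    {φ w : α → ℝ} {U : Set α} (hφ : Continuous φ) (hU : IsOpen U) (hsupp : tsupport φ ⊆ U)
    (hw : ContinuousOn w U) : Continuous fun x ↦ φ x * w x :=
  (hφ.continuousOn.mul hw).continuous_of_tsupport_subset hU
    ((tsupport_mul_subset_left (f := φ) (g := w)).trans hsupp)

section NormedGroup

variable {E : Type*} [NormedAddCommGroup E] {F : ℝ → E}

theorem HasCompactSupport.norm_sq_mul (hcs : HasCompactSupport F) (w : ℝ → ℝ) :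
    HasCompactSupport fun x ↦ ‖F x‖ ^ 2 * w x :=
  (hcs.comp_left (g := fun v : E ↦ ‖v‖ ^ 2) (by simp)).mul_right

theorem Continuous.norm_sq_mul_continuousOn_of_tsupport_subset {w : ℝ → ℝ} {U : Set ℝ}
    (hF : Continuous F) (hU : IsOpen U) (hsupp : tsupport F ⊆ U) (hw : ContinuousOn w U) :
    Continuous fun x ↦ ‖F x‖ ^ 2 * w x :=
  (show Continuous fun x ↦ ‖F x‖ ^ 2 by fun_prop).mul_continuousOn_of_tsupport_subset hU
    ((tsupport_comp_subset (g := fun v : E ↦ ‖v‖ ^ 2) (by simp) F).trans hsupp) hw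

theorem Continuous.integrable_norm_sq_mul_of_tsupport_subset {w : ℝ → ℝ} {U : Set ℝ}
    (hF : Continuous F) (hcs : HasCompactSupport F) (hU : IsOpen U) (hsupp : tsupport F ⊆ U)
    (hw : ContinuousOn w U) : Integrable fun x ↦ ‖F x‖ ^ 2 * w x :=
  (hF.norm_sq_mul_continuousOn_of_tsupport_subset hU hsupp hw).integrable_of_hasCompactSupport
    (hcs.norm_sq_mul w)

theorem exists_pos_forall_norm_sq_mul_rpow_le (hF : Continuous F) (hcs : HasCompactSupport F)
    (hsupp : tsupport F ⊆ Ioi 0) (γ : ℝ) :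
    ∃ r₀ > 0, ∀ x > 0, ‖F x‖ ^ 2 * x ^ γ ≤ ‖F r₀‖ ^ 2 * r₀ ^ γ := by
  have hcont : Continuous fun x ↦ ‖F x‖ ^ 2 * x ^ γ :=
    hF.norm_sq_mul_continuousOn_of_tsupport_subset isOpen_Ioi hsupp
      (continuousOn_id.rpow_const fun x hx ↦ Or.inl (ne_of_gt hx))
  obtain ⟨r₁, hr₁⟩ := hcont.exists_forall_ge_of_hasCompactSupport (hcs.norm_sq_mul _)
  by_cases hr₁_pos : 0 < r₁
  · exact ⟨r₁, hr₁_pos, fun x _ ↦ hr₁ x⟩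
  · have hFr₁ : F r₁ = 0 := image_eq_zero_of_notMem_tsupport fun h ↦ hr₁_pos (hsupp h)
    refine ⟨1, one_pos, fun x _ ↦ (hr₁ x).trans ?_⟩
    simp [hFr₁]

theorem integral_norm_pow_four_mul_rpow_le (hF : Continuous F) (hcs : HasCompactSupport F)
    (hsupp : tsupport F ⊆ Ioi 0) {β M : ℝ} (hM : ∀ x > 0, ‖F x‖ ^ 2 * x ^ (2 * β) ≤ M) :
    ∫ x in Ioi 0, ‖F x‖ ^ 4 * x ^ β ≤ (∫ x in Ioi 0, ‖F x‖ ^ 2 * x ^ (-β)) * M := by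
  rw [← integral_mul_const]
  refine integral_mono_of_nonneg (ae_restrict_of_forall_mem measurableSet_Ioi fun x hx ↦ ?_)
    ((hF.integrable_norm_sq_mul_of_tsupport_subset hcs isOpen_Ioi hsupp
      (continuousOn_id.rpow_const fun x hx ↦ Or.inl (ne_of_gt hx))).integrableOn.mul_const M)
    (ae_restrict_of_forall_mem measurableSet_Ioi fun x (hx : 0 < x) ↦ ?_)
  · have : 0 < x := hx
    positivity
  · calc ‖F x‖ ^ 4 * x ^ β = ‖F x‖ ^ 2 * x ^ (-β) * (‖F x‖ ^ 2 * x ^ (2 * β)) := by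
          rw [mul_mul_mul_comm, ← Real.rpow_add hx]
          ring_nf
      _ ≤ ‖F x‖ ^ 2 * x ^ (-β) * M := by gcongr; exact hM x hx

end NormedGroup

section InnerProductSpace

variable {E : Type*} [NormedAddCommGroup E] [InnerProductSpace ℝ E] {Ψ : ℝ → E}

theorem norm_sq_le_two_mul_integral_Ioi_norm_mul_norm_deriv (hΨ : ContDiff ℝ 1 Ψ)
    (hcs : HasCompactSupport Ψ) (r : ℝ) :
    ‖Ψ r‖ ^ 2 ≤ 2 * ∫ x in Ioi r, ‖Ψ x‖ * ‖deriv Ψ x‖ := by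
  have hΨ' : Continuous (deriv Ψ) := hΨ.continuous_deriv le_rfl
  have hderiv (x : ℝ) : HasDerivAt (fun t ↦ ‖Ψ t‖ ^ 2) (2 * ⟪Ψ x, deriv Ψ x⟫) x := by
    simpa using (hΨ.differentiable one_ne_zero x).hasDerivAt.norm_sq
  have hint : Integrable fun x ↦ 2 * ⟪Ψ x, deriv Ψ x⟫ :=
    (continuous_const.mul (hΨ.continuous.inner hΨ')).integrable_of_hasCompactSupport
      (hcs.mono fun x hx h ↦ hx (by simp [h]))
  have hlim : Tendsto (fun t ↦ ‖Ψ t‖ ^ 2) atTop (𝓝 0) :=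
    ((hcs.comp_left (g := fun v : E ↦ ‖v‖ ^ 2) (by simp)).is_zero_at_infty).mono_left
      atTop_le_cocompact
  have hftc := integral_Ioi_of_hasDerivAt_of_tendsto' (a := r) (fun x _ ↦ hderiv x)
    hint.integrableOn hlim
  rw [zero_sub, ← neg_eq_iff_eq_neg, ← integral_neg] at hftc
  rw [← hftc, ← integral_const_mul]
  refine integral_mono hint.integrableOn.neg ?_ fun x ↦ ?_
  · refine (Continuous.integrable_of_hasCompactSupport (by fun_prop) ?_).integrableOn
    exact hcs.mono fun x hx h ↦ hx (by simp [h])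
  · have := abs_real_inner_le_norm (Ψ x) (deriv Ψ x)
    linarith [neg_abs_le ⟪Ψ x, deriv Ψ x⟫]

theorem norm_pow_four_le_mul_integral_Ioi (hΨ : ContDiff ℝ 1 Ψ) (hcs : HasCompactSupport Ψ)
    (hsupp : tsupport Ψ ⊆ Ioi 0) {r : ℝ} (hr : 0 < r) :
    ‖Ψ r‖ ^ 4 ≤ 4 * (∫ x in Ioi r, ‖Ψ x‖ ^ 2 / x) * ∫ x in Ioi 0, ‖deriv Ψ x‖ ^ 2 * x := by
  set f : ℝ → ℝ := fun x ↦ ‖Ψ x‖ * (√x)⁻¹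
  set g : ℝ → ℝ := fun x ↦ ‖deriv Ψ x‖ * √x
  have hΨ' : Continuous (deriv Ψ) := hΨ.continuous_deriv le_rfl
  have hf : Continuous f :=
    hΨ.continuous.norm.mul_continuousOn_of_tsupport_subset isOpen_Ioi
      ((tsupport_comp_subset norm_zero Ψ).trans hsupp)
      (Real.continuous_sqrt.continuousOn.inv₀ fun x hx ↦ (Real.sqrt_pos.2 hx).ne')
  have hg : Continuous g := hΨ'.norm.mul Real.continuous_sqrt
  have hf_memLp : MemLp f 2 (volume.restrict (Ioi r)) :=
    (hf.memLp_of_hasCompactSupport hcs.norm.mul_right).restrict _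
  have hg_memLp : MemLp g 2 (volume.restrict (Ioi r)) :=
    (hg.memLp_of_hasCompactSupport hcs.deriv.norm.mul_right).restrict _
  have hCS := sq_integral_mul_le_integral_sq_mul_integral_sq
    (ae_of_all _ fun x ↦ by positivity) (ae_of_all _ fun x ↦ by positivity) hf_memLp hg_memLp
  have hfg : ∫ x in Ioi r, ‖Ψ x‖ * ‖deriv Ψ x‖ = ∫ x in Ioi r, f x * g x := by
    refine setIntegral_congr_fun measurableSet_Ioi fun x hx ↦ ?_
    have : √x ≠ 0 := Real.sqrt_ne_zero'.2 (hr.trans hx)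
    simp only [f, g]
    field_simp
  have hf_sq : ∫ x in Ioi r, f x ^ 2 = ∫ x in Ioi r, ‖Ψ x‖ ^ 2 / x := by
    refine setIntegral_congr_fun measurableSet_Ioi fun x hx ↦ ?_
    simp only [f, mul_pow, inv_pow, Real.sq_sqrt (hr.trans hx).le, div_eq_mul_inv]
  have hg_sq : ∫ x in Ioi r, g x ^ 2 ≤ ∫ x in Ioi 0, ‖deriv Ψ x‖ ^ 2 * x := by
    have hint : Integrable fun x ↦ ‖deriv Ψ x‖ ^ 2 * x :=
      hΨ'.integrable_norm_sq_mul_of_tsupport_subset hcs.deriv isOpen_Ioi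
        (tsupport_deriv_subset.trans hsupp) continuousOn_id
    calc ∫ x in Ioi r, g x ^ 2 = ∫ x in Ioi r, ‖deriv Ψ x‖ ^ 2 * x :=
          setIntegral_congr_fun measurableSet_Ioi fun x hx ↦ by
            simp only [g, mul_pow, Real.sq_sqrt (hr.trans hx).le]
      _ ≤ _ := setIntegral_mono_set hint.integrableOn
          (ae_restrict_of_forall_mem measurableSet_Ioi fun x (hx : 0 < x) ↦ by positivity)
          (Ioi_subset_Ioi hr.le).eventuallyLE
  calc ‖Ψ r‖ ^ 4 = (‖Ψ r‖ ^ 2) ^ 2 := by ring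
    _ ≤ (2 * ∫ x in Ioi r, f x * g x) ^ 2 := by
      rw [← hfg]
      gcongr
      exact norm_sq_le_two_mul_integral_Ioi_norm_mul_norm_deriv hΨ hcs r
    _ = 4 * (∫ x in Ioi r, f x * g x) ^ 2 := by ring
    _ ≤ 4 * ((∫ x in Ioi r, f x ^ 2) * ∫ x in Ioi r, g x ^ 2) := by gcongr
    _ ≤ _ := by
      rw [← hf_sq, ← mul_assoc]
      gcongr

theorem norm_sq_le_of_forall_norm_sq_mul_rpow_le (hΨ : ContDiff ℝ 1 Ψ)
    (hcs : HasCompactSupport Ψ) (hsupp : tsupport Ψ ⊆ Ioi 0) {β r : ℝ} (hβ : 0 < β) (hr : 0 < r)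
    (hmax : ∀ x ∈ Ioi r, ‖Ψ x‖ ^ 2 * x ^ (2 * β) ≤ ‖Ψ r‖ ^ 2 * r ^ (2 * β)) :
    ‖Ψ r‖ ^ 2 ≤ 2 / β * ∫ x in Ioi 0, ‖deriv Ψ x‖ ^ 2 * x := by
  have hexp : -2 * β - 1 < -1 := by linarith
  have hI : ∫ x in Ioi r, ‖Ψ x‖ ^ 2 / x ≤ ‖Ψ r‖ ^ 2 / (2 * β) :=
    calc ∫ x in Ioi r, ‖Ψ x‖ ^ 2 / x
        ≤ ∫ x in Ioi r, ‖Ψ r‖ ^ 2 * r ^ (2 * β) * x ^ (-2 * β - 1) := by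
          refine integral_mono_of_nonneg
            (ae_restrict_of_forall_mem measurableSet_Ioi fun x hx ↦ ?_)
            ((integrableOn_Ioi_rpow_of_lt hexp hr).const_mul _)
            (ae_restrict_of_forall_mem measurableSet_Ioi fun x hx ↦ ?_)
          · have : 0 < x := hr.trans hx
            positivity
          · have hx0 : 0 < x := hr.trans hx
            calc ‖Ψ x‖ ^ 2 / x = ‖Ψ x‖ ^ 2 * x ^ (2 * β) * x ^ (-2 * β - 1) := by
                  rw [mul_assoc, ← Real.rpow_add hx0, show 2 * β + (-2 * β - 1) = -1 by ring,
                    Real.rpow_neg_one, div_eq_mul_inv]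
              _ ≤ _ := mul_le_mul_of_nonneg_right (hmax x hx) (by positivity)
      _ = ‖Ψ r‖ ^ 2 / (2 * β) := by
          rw [integral_const_mul, integral_Ioi_rpow_of_lt hexp hr,
            show -2 * β - 1 + 1 = -(2 * β) by ring, Real.rpow_neg hr.le]
          have : r ^ (2 * β) ≠ 0 := (Real.rpow_pos_of_pos hr _).ne'
          field_simp
  have hD : 0 ≤ ∫ x in Ioi 0, ‖deriv Ψ x‖ ^ 2 * x :=
    setIntegral_nonneg measurableSet_Ioi fun x (hx : 0 < x) ↦ by positivity
  have key :
      ‖Ψ r‖ ^ 2 * ‖Ψ r‖ ^ 2 ≤ 2 / β * (∫ x in Ioi 0, ‖deriv Ψ x‖ ^ 2 * x) * ‖Ψ r‖ ^ 2 :=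
    calc ‖Ψ r‖ ^ 2 * ‖Ψ r‖ ^ 2 = ‖Ψ r‖ ^ 4 := by ring
      _ ≤ _ := norm_pow_four_le_mul_integral_Ioi hΨ hcs hsupp hr
      _ ≤ 4 * (‖Ψ r‖ ^ 2 / (2 * β)) * ∫ x in Ioi 0, ‖deriv Ψ x‖ ^ 2 * x := by gcongr
      _ = _ := by field_simp; ring
  rcases (sq_nonneg ‖Ψ r‖).eq_or_lt with h0 | hpos
  · rw [← h0]
    positivity
  · exact le_of_mul_le_mul_right key hpos

theorem norm_pow_four_mul_sq_le (hΨ : ContDiff ℝ 1 Ψ) (hcs : HasCompactSupport Ψ)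
    (hsupp : tsupport Ψ ⊆ Ioi 0) {r : ℝ} (hr : 0 < r) :
    ‖Ψ r‖ ^ 4 * r ^ 2 ≤
      4 * (∫ x in Ioi 0, ‖Ψ x‖ ^ 2 * x) * ∫ x in Ioi 0, ‖deriv Ψ x‖ ^ 2 * x := by
  have hB : Integrable fun x ↦ ‖Ψ x‖ ^ 2 * x :=
    hΨ.continuous.integrable_norm_sq_mul_of_tsupport_subset hcs isOpen_Ioi hsupp continuousOn_id
  have hI : ∫ x in Ioi r, ‖Ψ x‖ ^ 2 / x ≤ (∫ x in Ioi 0, ‖Ψ x‖ ^ 2 * x) / r ^ 2 :=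
    calc ∫ x in Ioi r, ‖Ψ x‖ ^ 2 / x ≤ ∫ x in Ioi r, ‖Ψ x‖ ^ 2 * x / r ^ 2 := by
          refine integral_mono_of_nonneg
            (ae_restrict_of_forall_mem measurableSet_Ioi fun x hx ↦ ?_)
            (hB.div_const _).integrableOn
            (ae_restrict_of_forall_mem measurableSet_Ioi fun x hx ↦ ?_)
          · have : 0 < x := hr.trans hx
            positivity
          · have hx0 : 0 < x := hr.trans hx
            rw [div_le_div_iff₀ hx0 (by positivity)]
            have : r ^ 2 ≤ x * x := by nlinarith [mem_Ioi.1 hx]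
            calc ‖Ψ x‖ ^ 2 * r ^ 2 ≤ ‖Ψ x‖ ^ 2 * (x * x) := by gcongr
              _ = _ := by ring
      _ ≤ (∫ x in Ioi 0, ‖Ψ x‖ ^ 2 * x) / r ^ 2 := by
          rw [integral_div]
          refine div_le_div_of_nonneg_right (setIntegral_mono_set hB.integrableOn ?_
            (Ioi_subset_Ioi hr.le).eventuallyLE) (by positivity)
          exact ae_restrict_of_forall_mem measurableSet_Ioi fun x (hx : 0 < x) ↦ by positivity
  have hD : 0 ≤ ∫ x in Ioi 0, ‖deriv Ψ x‖ ^ 2 * x :=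
    setIntegral_nonneg measurableSet_Ioi fun x (hx : 0 < x) ↦ by positivity
  calc ‖Ψ r‖ ^ 4 * r ^ 2
      ≤ 4 * (∫ x in Ioi r, ‖Ψ x‖ ^ 2 / x) * (∫ x in Ioi 0, ‖deriv Ψ x‖ ^ 2 * x) * r ^ 2 := by
        gcongr
        exact norm_pow_four_le_mul_integral_Ioi hΨ hcs hsupp hr
    _ ≤ 4 * ((∫ x in Ioi 0, ‖Ψ x‖ ^ 2 * x) / r ^ 2) * (∫ x in Ioi 0, ‖deriv Ψ x‖ ^ 2 * x) *
          r ^ 2 := by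
        gcongr
    _ = _ := by field_simp

end InnerProductSpace

theorem stmt_10_general (n : ℕ) (β : ℝ) (hβ₁ : 1 / 10 ≤ β) (hβ₂ : β ≤ 1 / 4) :
    ∃ C : ℝ, 0 < C ∧
      ∀ Ψ : ℝ → EuclideanSpace ℝ (Fin n),
        ContDiff ℝ 1 Ψ → HasCompactSupport Ψ → tsupport Ψ ⊆ Ioi 0 →
        (∫ r in Ioi (0 : ℝ), ‖Ψ r‖ ^ 4 * r ^ β) ≤
          C * (∫ r in Ioi (0 : ℝ), ‖Ψ r‖ ^ 2 * r ^ (-β)) *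
            (∫ r in Ioi (0 : ℝ), ‖Ψ r‖ ^ 2 * r) ^ β *
            (∫ r in Ioi (0 : ℝ), ‖deriv Ψ r‖ ^ 2 * r) ^ (1 - β) := by
  have hβ : 0 < β := by linarith
  refine ⟨(2 / β) ^ (1 - 2 * β) * 4 ^ β, by positivity, fun Ψ hΨ hcs hsupp ↦ ?_⟩
  set A := ∫ r in Ioi (0 : ℝ), ‖Ψ r‖ ^ 2 * r ^ (-β)
  set B := ∫ r in Ioi (0 : ℝ), ‖Ψ r‖ ^ 2 * r
  set D := ∫ r in Ioi (0 : ℝ), ‖deriv Ψ r‖ ^ 2 * r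
  have hA : 0 ≤ A := setIntegral_nonneg measurableSet_Ioi fun r (hr : 0 < r) ↦ by positivity
  have hB : 0 ≤ B := setIntegral_nonneg measurableSet_Ioi fun r (hr : 0 < r) ↦ by positivity
  have hD : 0 ≤ D := setIntegral_nonneg measurableSet_Ioi fun r (hr : 0 < r) ↦ by positivity
  obtain ⟨r₀, hr₀, hmax⟩ :=
    exists_pos_forall_norm_sq_mul_rpow_le hΨ.continuous hcs hsupp (2 * β)
  have hsup : ‖Ψ r₀‖ ^ 2 * r₀ ^ (2 * β) ≤ (2 / β * D) ^ (1 - 2 * β) * (4 * B * D) ^ β :=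
    Real.mul_rpow_le_of_le_of_sq_mul_sq_le (sq_nonneg _) hr₀.le hβ.le (by linarith)
      (norm_sq_le_of_forall_norm_sq_mul_rpow_le hΨ hcs hsupp hβ hr₀
        fun x hx ↦ hmax x (hr₀.trans hx))
      (by simpa only [← pow_mul] using norm_pow_four_mul_sq_le hΨ hcs hsupp hr₀)
  calc ∫ r in Ioi (0 : ℝ), ‖Ψ r‖ ^ 4 * r ^ β ≤ A * (‖Ψ r₀‖ ^ 2 * r₀ ^ (2 * β)) :=
        integral_norm_pow_four_mul_rpow_le hΨ.continuous hcs hsupp hmax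
    _ ≤ A * ((2 / β * D) ^ (1 - 2 * β) * (4 * B * D) ^ β) := by gcongr
    _ = (2 / β) ^ (1 - 2 * β) * 4 ^ β * A * B ^ β * D ^ (1 - β) := by
        rw [Real.mul_rpow (by positivity) hD, Real.mul_rpow (by positivity) hD,
          Real.mul_rpow (by norm_num) hB, show 1 - β = 1 - 2 * β + β by ring,
          Real.rpow_add' hD (by linarith)]
        ring

/-- Sobolev–Hardy interpolation inequality: for `1/10 ≤ β ≤ 1/4` there is a
constant `C = C(β)` such that for all `C¹` compactly supported `Ψ : (0,∞) → ℝⁿ`,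
`∫₀^∞ |Ψ|⁴ r^β dr ≤ C (∫₀^∞ |Ψ|² r^{−β} dr)(∫₀^∞ |Ψ|² r dr)^β (∫₀^∞ |Ψ'|² r dr)^{1−β}`. -/
theorem stmt_10 (n : ℕ) (hn : 1 ≤ n) (β : ℝ) (hβ₁ : 1 / 10 ≤ β) (hβ₂ : β ≤ 1 / 4) :
    ∃ C : ℝ, 0 < C ∧
      ∀ Ψ : ℝ → EuclideanSpace ℝ (Fin n),
        ContDiff ℝ 1 Ψ → HasCompactSupport Ψ → tsupport Ψ ⊆ Ioi 0 →
        (∫ r in Ioi (0 : ℝ), ‖Ψ r‖ ^ 4 * r ^ β) ≤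
          C * (∫ r in Ioi (0 : ℝ), ‖Ψ r‖ ^ 2 * r ^ (-β)) *
            (∫ r in Ioi (0 : ℝ), ‖Ψ r‖ ^ 2 * r) ^ β *
            (∫ r in Ioi (0 : ℝ), ‖deriv Ψ r‖ ^ 2 * r) ^ (1 - β) :=
  stmt_10_general n β hβ₁ hβ₂
end
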